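/- arXiv:quant-ph/0607134 — 8 statements merged into one kernel-verified Lean document; each statement's English description precedes it below -/
import Mathlib

section
/- Let H be a complex Hilbert space, S : ℝ → B(H) a strongly continuous one-parameter unitary group, and ρ a bounded positive self-adjoint operator on H commuting with S_t for every t. Let u_1,…,u_N, v_1,…,v_N ∈ H represent the finite-rank operator X = Σ_j |u_j⟩⟨v_j|, and define F_{X,X}(t) = Σ_{j,k=1}^N ⟨u_j, S_t u_k⟩ ⟨S_t v_k, ρ v_j⟩ (which equals Tr(ρ X* S_t X S_t*)). If t ↦ F_{X,X}(t) is integrable on ℝ, then for every ω ∈ ℝ the integral ⟨X,X⟩_ω := ∫_ℝ e^{−iωt} F_{X,X}(t) dt is a nonnegative real number. (Hence ⟨·,·⟩_ω defines a prescalar product on the space of finite-rank operators for which these integrals exist.) -/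
/-!
With `R = √ρ`, which commutes with every `S_t`, the integrand `G(τ) = e^{-iωτ} F_{X,X}(τ)` is a
positive-definite function: `G(t - s) = ⟪w s, w t⟫` for the continuous path
`w t = Σ_k (e^{-iωt} S_t u_k) ⊗ conj(S_t R v_k)`, i.e. the Hilbert–Schmidt operator
`e^{-iωt} S_t X R S_t*` (the complex conjugate is realised in `ℓ²` through a Hilbert basis).
Hence `∫_{(0,T]²} G(t - s) ds dt = ‖∫_0^T w‖² ≥ 0`; this double integral equals
`T ∫ (1 - |τ|/T)⁺ G(τ) dτ`, which tends to `T ∫ G` by dominated convergence.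
-/

open MeasureTheory Filter Topology Set
open scoped InnerProductSpace ComplexOrder TensorProduct ComplexConjugate

section Autocorrelation

variable {E : Type*} [NormedAddCommGroup E] [NormedSpace ℝ E]

theorem integral_integral_sub_eq_integral_volume_smul [CompleteSpace E] {G : ℝ → E}
    (hG : Integrable G) {A : Set ℝ} (hA : MeasurableSet A) (hA' : volume A ≠ ⊤) :
    ∫ s in A, ∫ t in A, G (t - s) = ∫ τ, volume.real ((· + τ) ⁻¹' A ∩ A) • G τ := by
  have : IsFiniteMeasure (volume.restrict A) := isFiniteMeasure_restrict.2 hA'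
  let f : ℝ → ℝ → E := fun s τ => A.indicator (1 : ℝ → ℝ) (s + τ) • G τ
  have h_shift : ∀ s, ∫ t in A, G (t - s) = ∫ τ, f s τ := fun s => by
    rw [← integral_indicator hA, ← integral_add_right_eq_self _ s]
    congr 1 with τ
    by_cases h : s + τ ∈ A <;> simp [f, h, add_comm τ s]
  have hf : Integrable (Function.uncurry f) ((volume.restrict A).prod volume) := by
    refine Integrable.mono' ((integrable_const (1 : ℝ)).mul_prod hG.norm) ?_ (ae_of_all _ ?_)
    · exact (((measurable_one.indicator hA).comp measurable_add).aestronglyMeasurable).smul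
        hG.aestronglyMeasurable.comp_snd
    · intro p
      rw [Function.uncurry_apply_pair, norm_smul, one_mul]
      exact mul_le_of_le_one_left (norm_nonneg _)
        ((norm_indicator_le_norm_self _ _).trans_eq norm_one)
  have h_preimage : ∀ τ,
      (fun s => A.indicator (1 : ℝ → ℝ) (s + τ)) = ((· + τ) ⁻¹' A).indicator 1 :=
    fun τ => funext fun s => (indicator_comp_right (fun s => s + τ)).symm
  simp_rw [h_shift]
  rw [integral_integral_swap hf]
  congr 1 with τ
  rw [integral_smul_const, h_preimage, integral_indicator_one (measurable_add_const τ hA),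
    measureReal_restrict_apply (measurable_add_const τ hA)]

theorem volume_real_preimage_add_Ioc_inter_Ioc (T τ : ℝ) :
    volume.real ((· + τ) ⁻¹' Ioc 0 T ∩ Ioc 0 T) = max (T - |τ|) 0 := by
  rw [preimage_add_const_Ioc, Ioc_inter_Ioc, Real.volume_real_Ioc]
  congr 1
  rcases le_total 0 τ with h | h
  · rw [abs_of_nonneg h, min_eq_left (by linarith), max_eq_right (by linarith)]; ring
  · rw [abs_of_nonpos h, min_eq_right (by linarith), max_eq_left (by linarith)]; ring

/-- `T • triangleWeight T` is the autocorrelation of the indicator of `(0, T]`. -/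
noncomputable def triangleWeight (T τ : ℝ) : ℝ := max (1 - |τ| / T) 0

theorem integral_triangleWeight_smul [CompleteSpace E] {G : ℝ → E} (hG : Integrable G) {T : ℝ}
    (hT : 0 < T) :
    ∫ τ, triangleWeight T τ • G τ = T⁻¹ • ∫ s in Ioc 0 T, ∫ t in Ioc 0 T, G (t - s) := by
  rw [integral_integral_sub_eq_integral_volume_smul hG measurableSet_Ioc measure_Ioc_lt_top.ne,
    ← integral_smul]
  congr 1 with τ
  rw [volume_real_preimage_add_Ioc_inter_Ioc, smul_smul, triangleWeight, mul_max_of_nonneg _ _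
    (inv_nonneg.2 hT.le), mul_zero, mul_sub, inv_mul_cancel₀ hT.ne', inv_mul_eq_div]

theorem tendsto_integral_triangleWeight_smul {G : ℝ → E} (hG : Integrable G) :
    Tendsto (fun T => ∫ τ, triangleWeight T τ • G τ) atTop (𝓝 (∫ τ, G τ)) := by
  refine tendsto_integral_filter_of_dominated_convergence (fun τ => ‖G τ‖)
    (Eventually.of_forall fun T => ?_) ((eventually_ge_atTop 0).mono fun T hT => ?_) hG.norm
    (ae_of_all _ fun τ => ?_)
  · have : Continuous (triangleWeight T) := by unfold triangleWeight; fun_prop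
    exact this.aestronglyMeasurable.smul hG.aestronglyMeasurable
  · refine ae_of_all _ fun τ => ?_
    rw [norm_smul]
    refine mul_le_of_le_one_left (norm_nonneg _) ?_
    rw [triangleWeight, Real.norm_of_nonneg (le_max_right _ _)]
    exact max_le (by have := div_nonneg (abs_nonneg τ) hT; linarith) zero_le_one
  · have h : Tendsto (fun T => triangleWeight T τ) atTop (𝓝 1) := by
      have hdiv : Tendsto (fun T : ℝ => |τ| / T) atTop (𝓝 0) :=
        tendsto_const_nhds.div_atTop tendsto_id
      simpa [triangleWeight] using ((tendsto_const_nhds (x := (1 : ℝ))).sub hdiv).max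
        (tendsto_const_nhds (x := (0 : ℝ)))
    simpa using h.smul_const (G τ)

end Autocorrelation

theorem integral_integral_inner_self_nonneg {K : Type*} [NormedAddCommGroup K]
    [InnerProductSpace ℂ K] [CompleteSpace K] {α : Type*} [MeasurableSpace α] {μ : Measure α}
    {w : α → K} (hw : Integrable w μ) : 0 ≤ ∫ s, ∫ t, ⟪w s, w t⟫_ℂ ∂μ ∂μ := by
  set I := ∫ s, w s ∂μ
  calc (0 : ℂ) ≤ ⟪I, I⟫_ℂ := by rw [inner_self_eq_norm_sq_to_K]; positivity
    _ = conj (∫ s, ⟪I, w s⟫_ℂ ∂μ) := by rw [integral_inner hw, inner_conj_symm]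
    _ = ∫ s, ∫ t, ⟪w s, w t⟫_ℂ ∂μ ∂μ := by
      simp_rw [← integral_conj, inner_conj_symm, integral_inner hw]
      rfl

theorem integral_nonneg_of_inner_eq_comp_sub {K : Type*} [NormedAddCommGroup K]
    [InnerProductSpace ℂ K] {w : ℝ → K} (hw : Continuous w) {G : ℝ → ℂ} (hG : Integrable G)
    (hwG : ∀ s t, ⟪w s, w t⟫_ℂ = G (t - s)) : 0 ≤ ∫ τ, G τ := by
  -- Bochner integrals of `w` need a complete target.
  let w' : ℝ → UniformSpace.Completion K := fun t => w t
  have hw' : Continuous w' := (UniformSpace.Completion.continuous_coe K).comp hw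
  have hpos : ∀ T > 0, 0 ≤ ∫ τ, triangleWeight T τ • G τ := fun T hT => by
    rw [integral_triangleWeight_smul hG hT]
    have := integral_integral_inner_self_nonneg
      ((hw'.integrableOn_Icc (μ := volume) (a := 0) (b := T)).mono_set Ioc_subset_Icc_self)
    simp only [w', UniformSpace.Completion.inner_coe, hwG] at this
    exact smul_nonneg (inv_nonneg.2 hT.le) this
  exact ge_of_tendsto (tendsto_integral_triangleWeight_smul hG) ((eventually_gt_atTop 0).mono hpos)

theorem lp.inner_star_star {ι 𝕜 : Type*} [RCLike 𝕜] (f g : lp (fun _ : ι => 𝕜) 2) :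
    ⟪star f, star g⟫_𝕜 = ⟪g, f⟫_𝕜 := by
  simp only [lp.inner_eq_tsum, lp.star_apply, RCLike.inner_apply, RCLike.star_def,
    RCLike.conj_conj, mul_comm]

namespace HilbertBasis

variable {ι H : Type*} [NormedAddCommGroup H] [InnerProductSpace ℂ H] (b : HilbertBasis ι ℂ H)

/-- `x ⊗ ȳ`, where `ȳ` is the complex conjugate of `y` in the coordinates of `b`. -/
noncomputable def tmulConj (x y : H) : H ⊗[ℂ] lp (fun _ : ι => ℂ) 2 := x ⊗ₜ star (b.repr y)

theorem inner_tmulConj (x y x' y' : H) :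
    ⟪b.tmulConj x y, b.tmulConj x' y'⟫_ℂ = ⟪x, x'⟫_ℂ * ⟪y', y⟫_ℂ := by
  rw [tmulConj, tmulConj, TensorProduct.inner_tmul, lp.inner_star_star,
    LinearIsometryEquiv.inner_map_map]

theorem continuous_tmulConj : Continuous fun p : H × H => b.tmulConj p.1 p.2 :=
  TensorProduct.continuous_tmul.comp
    (continuous_fst.prodMk (continuous_star.comp (b.repr.continuous.comp continuous_snd)))

end HilbertBasis

section UnitaryGroup

variable {H : Type*} [NormedAddCommGroup H] [InnerProductSpace ℂ H] [CompleteSpace H]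

theorem inner_sqrt_apply_sqrt_apply {ρ : H →L[ℂ] H} (hρ : 0 ≤ ρ) (x y : H) :
    ⟪CFC.sqrt ρ x, CFC.sqrt ρ y⟫_ℂ = ⟪x, ρ y⟫_ℂ := by
  rw [((CFC.sqrt ρ).nonneg_iff_isPositive.1 (CFC.sqrt_nonneg ρ)).inner_left_eq_inner_right,
    ← mul_apply_eq_comp, CFC.sqrt_mul_sqrt_self ρ hρ]

variable {S : ℝ → (H →L[ℂ] H)}

theorem inner_apply_apply_eq_inner_apply_sub (hSadd : ∀ s t : ℝ, S (s + t) = S s * S t)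
    (hSunitary : ∀ t : ℝ, S t ∈ unitary (H →L[ℂ] H)) (s t : ℝ) (x y : H) :
    ⟪S s x, S t y⟫_ℂ = ⟪x, S (t - s) y⟫_ℂ := by
  rw [← add_sub_cancel s t, hSadd, mul_apply_eq_comp,
    ContinuousLinearMap.inner_map_map_of_mem_unitary (hSunitary s), add_sub_cancel_left]

theorem inner_apply_mul_inner_apply_sqrt_apply (hSadd : ∀ s t : ℝ, S (s + t) = S s * S t)
    (hSunitary : ∀ t : ℝ, S t ∈ unitary (H →L[ℂ] H)) {ρ : H →L[ℂ] H} (hρ : 0 ≤ ρ)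
    (hρS : ∀ t : ℝ, ρ * S t = S t * ρ) (s t : ℝ) (x x' y y' : H) :
    ⟪S s x, S t x'⟫_ℂ * ⟪S t (CFC.sqrt ρ y'), S s (CFC.sqrt ρ y)⟫_ℂ =
      ⟪x, S (t - s) x'⟫_ℂ * ⟪S (t - s) y', ρ y⟫_ℂ := by
  have hS := inner_apply_apply_eq_inner_apply_sub hSadd hSunitary
  have hS_sqrt : S (t - s) (CFC.sqrt ρ y') = CFC.sqrt ρ (S (t - s) y') := by
    rw [← mul_apply_eq_comp, ← mul_apply_eq_comp, CFC.sqrt_eq_cfc,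
      (Commute.cfc_nnreal (hρS (t - s)) NNReal.sqrt).eq.symm]
  rw [hS, ← inner_conj_symm (S t _), hS, inner_conj_symm, hS_sqrt,
    inner_sqrt_apply_sqrt_apply hρ]

end UnitaryGroup

theorem conj_exp_mul_exp (ω s t : ℝ) :
    conj (Complex.exp (-(Complex.I * ω * s))) * Complex.exp (-(Complex.I * ω * t)) =
      Complex.exp (-(Complex.I * ω * ↑(t - s))) := by
  rw [← Complex.exp_conj, ← Complex.exp_add]
  congr 1
  simp only [map_neg, map_mul, Complex.conj_I, Complex.conj_ofReal, Complex.ofReal_sub]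
  ring

theorem prescalar_product_nonneg_general
    {H : Type*} [NormedAddCommGroup H] [InnerProductSpace ℂ H] [CompleteSpace H]
    (S : ℝ → (H →L[ℂ] H))
    (hSadd : ∀ s t : ℝ, S (s + t) = S s * S t)
    (hSunitary : ∀ t : ℝ, S t ∈ unitary (H →L[ℂ] H))
    (hScont : ∀ x : H, Continuous fun t : ℝ => S t x)
    (ρ : H →L[ℂ] H) (hρ : ρ.IsPositive)
    (hρS : ∀ t : ℝ, ρ * S t = S t * ρ)
    (N : ℕ) (u v : Fin N → H)
    (hint : Integrable fun t : ℝ =>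
      ∑ j, ∑ k, ⟪u j, S t (u k)⟫_ℂ * ⟪S t (v k), ρ (v j)⟫_ℂ)
    (ω : ℝ) :
    0 ≤ ∫ t : ℝ, Complex.exp (-(Complex.I * ω * t)) *
        ∑ j, ∑ k, ⟪u j, S t (u k)⟫_ℂ * ⟪S t (v k), ρ (v j)⟫_ℂ := by
  obtain ⟨ι, b, -⟩ := exists_hilbertBasis ℂ H
  have hcorr := inner_apply_mul_inner_apply_sqrt_apply hSadd hSunitary
    (ρ.nonneg_iff_isPositive.2 hρ) hρS
  refine integral_nonneg_of_inner_eq_comp_sub (w := fun t => ∑ k,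
    b.tmulConj (Complex.exp (-(Complex.I * ω * t)) • S t (u k)) (S t (CFC.sqrt ρ (v k))))
    ?_ ?_ fun s t => ?_
  · have := b.continuous_tmulConj
    fun_prop
  · exact hint.bdd_mul (c := 1) (by fun_prop) (ae_of_all _ fun t => by simp [Complex.norm_exp])
  · simp only [sum_inner, inner_sum, b.inner_tmulConj, inner_smul_left, inner_smul_right]
    rw [← conj_exp_mul_exp, Finset.mul_sum, Finset.sum_comm]
    refine Finset.sum_congr rfl fun j _ => ?_
    rw [Finset.mul_sum]
    refine Finset.sum_congr rfl fun k _ => ?_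
    rw [← hcorr]
    ring

/-- Positivity of the prescalar product `⟨X,X⟩_ω = ∫ e^{−iωt} Tr(ρ X* S_t X S_t*) dt`
on finite-rank operators `X = Σ_j |u_j⟩⟨v_j|`, for a strongly continuous one-parameter
unitary group `S` and a positive operator `ρ` commuting with it. -/
theorem prescalar_product_nonneg
    {H : Type*} [NormedAddCommGroup H] [InnerProductSpace ℂ H] [CompleteSpace H]
    (S : ℝ → (H →L[ℂ] H))
    (hS0 : S 0 = 1)
    (hSadd : ∀ s t : ℝ, S (s + t) = S s * S t)
    (hSunitary : ∀ t : ℝ, S t ∈ unitary (H →L[ℂ] H))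
    (hScont : ∀ x : H, Continuous fun t : ℝ => S t x)
    (ρ : H →L[ℂ] H) (hρ : ρ.IsPositive)
    (hρS : ∀ t : ℝ, ρ * S t = S t * ρ)
    (N : ℕ) (u v : Fin N → H)
    (hint : Integrable fun t : ℝ =>
      ∑ j, ∑ k, ⟪u j, S t (u k)⟫_ℂ * ⟪S t (v k), ρ (v j)⟫_ℂ)
    (ω : ℝ) :
    0 ≤ ∫ t : ℝ, Complex.exp (-(Complex.I * ω * t)) *
        ∑ j, ∑ k, ⟪u j, S t (u k)⟫_ℂ * ⟪S t (v k), ρ (v j)⟫_ℂ :=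
  prescalar_product_nonneg_general S hSadd hSunitary hScont ρ hρ hρS N u v hint ω
end

section
/- Let H be a complex Hilbert space, S : ℝ → B(H) a strongly continuous one-parameter unitary group, and ρ a bounded positive self-adjoint operator on H commuting with S_t for every t. For finite families u_1,…,u_N, v_1,…,v_N and p_1,…,p_M, q_1,…,q_M in H, representing finite-rank operators X = Σ_j |u_j⟩⟨v_j| and Y = Σ_k |p_k⟩⟨q_k|, define F_{X,Y}(t) = Σ_{j,k} ⟨u_j, S_t p_k⟩ ⟨S_t q_k, ρ v_j⟩ (which equals Tr(ρ X* S_t Y S_t*)). If both t ↦ F_{X,Y}(t) and t ↦ F_{Y,X}(t) are integrable on ℝ, then for every ω ∈ ℝ the Hermitian symmetry holds: the complex conjugate of ∫_ℝ e^{−iωt} F_{X,Y}(t) dt equals ∫_ℝ e^{−iωt} F_{Y,X}(t) dt. -/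
/-!
Since `S_t* = S_{-t}` and `ρ` is self-adjoint and commutes with `S_t`, conjugating
`F_{X,Y}(t)` term by term gives `F_{Y,X}(-t)`. The Fourier kernel `e^{-iωt}` has the same
symmetry, `conj e^{-iωt} = e^{-iω(-t)}`, so conjugating the integral and substituting
`t ↦ -t` turns one side into the other.
-/

open MeasureTheory ComplexConjugate
open scoped InnerProductSpace

theorem star_eq_neg_of_map_add {G R : Type*} [AddGroup G] [Monoid R] [StarMul R]
    {S : G → R} (hS0 : S 0 = 1) (hSadd : ∀ s t, S (s + t) = S s * S t)
    (hSunitary : ∀ t, S t ∈ unitary R) (t : G) :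
    star (S t) = S (-t) :=
  left_inv_eq_right_inv (Unitary.star_mul_self_of_mem (hSunitary t))
    (by rw [← hSadd, add_neg_cancel, hS0])

theorem conj_integral_exp_mul_of_conj_eq_comp_neg {f g : ℝ → ℂ}
    (hfg : ∀ t, conj (f t) = g (-t)) (ω : ℝ) :
    conj (∫ t : ℝ, Complex.exp (-(Complex.I * ω * t)) * f t) =
      ∫ t : ℝ, Complex.exp (-(Complex.I * ω * t)) * g t := by
  rw [← integral_conj, ← integral_neg_eq_self]
  congr 1 with t
  rw [map_mul, hfg, neg_neg, ← Complex.exp_conj]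
  congr 2
  simp only [map_neg, map_mul, Complex.conj_I, Complex.conj_ofReal, Complex.ofReal_neg]
  ring

section TraceForm

variable {H : Type*} [NormedAddCommGroup H] [InnerProductSpace ℂ H]

/-- `Tr(ρ X* T Y T*)` for `X = Σ_j |u_j⟩⟨v_j|` and `Y = Σ_k |p_k⟩⟨q_k|`. -/
noncomputable def traceForm {N M : ℕ} (ρ T : H →L[ℂ] H) (u v : Fin N → H) (p q : Fin M → H) :
    ℂ :=
  ∑ j, ∑ k, ⟪u j, T (p k)⟫_ℂ * ⟪T (q k), ρ (v j)⟫_ℂ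

theorem conj_inner_apply_apply_of_commute [CompleteSpace H] {ρ T : H →L[ℂ] H}
    (hρ : IsSelfAdjoint ρ) (hρT : Commute ρ T) (x y : H) :
    conj ⟪T x, ρ y⟫_ℂ = ⟪T.adjoint y, ρ x⟫_ℂ := by
  rw [inner_conj_symm, ContinuousLinearMap.adjoint_inner_left, ← hρ.adjoint_eq,
    ContinuousLinearMap.adjoint_inner_left, hρ.adjoint_eq,
    show ρ (T x) = T (ρ x) from DFunLike.congr_fun hρT.eq x]

theorem conj_traceForm [CompleteSpace H] {N M : ℕ} {ρ T : H →L[ℂ] H} (hρ : IsSelfAdjoint ρ)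
    (hρT : Commute ρ T) (u v : Fin N → H) (p q : Fin M → H) :
    conj (traceForm ρ T u v p q) = traceForm ρ T.adjoint p q u v := by
  simp only [traceForm, map_sum, map_mul, conj_inner_apply_apply_of_commute hρ hρT,
    inner_conj_symm, ContinuousLinearMap.adjoint_inner_right]
  exact Finset.sum_comm

end TraceForm

theorem prescalar_product_hermitian_symmetry_general
    {H : Type*} [NormedAddCommGroup H] [InnerProductSpace ℂ H] [CompleteSpace H]
    (S : ℝ → (H →L[ℂ] H))
    (hS0 : S 0 = 1)
    (hSadd : ∀ s t : ℝ, S (s + t) = S s * S t)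
    (hSunitary : ∀ t : ℝ, S t ∈ unitary (H →L[ℂ] H))
    (ρ : H →L[ℂ] H) (hρ : ρ.IsPositive)
    (hρS : ∀ t : ℝ, ρ * S t = S t * ρ)
    (N M : ℕ) (u v : Fin N → H) (p q : Fin M → H)
    (ω : ℝ) :
    (starRingEnd ℂ) (∫ t : ℝ, Complex.exp (-(Complex.I * ω * t)) *
        ∑ j, ∑ k, ⟪u j, S t (p k)⟫_ℂ * ⟪S t (q k), ρ (v j)⟫_ℂ) =
      ∫ t : ℝ, Complex.exp (-(Complex.I * ω * t)) *
        ∑ k, ∑ j, ⟪p k, S t (u j)⟫_ℂ * ⟪S t (v j), ρ (q k)⟫_ℂ := by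
  have hadjoint : ∀ t, (S t).adjoint = S (-t) := fun t => by
    rw [← ContinuousLinearMap.star_eq_adjoint, star_eq_neg_of_map_add hS0 hSadd hSunitary]
  refine conj_integral_exp_mul_of_conj_eq_comp_neg (fun t => ?_) ω
  change conj (traceForm ρ (S t) u v p q) = traceForm ρ (S (-t)) p q u v
  rw [conj_traceForm hρ.isSelfAdjoint (hρS t), hadjoint]

/-- Hermitian symmetry of the prescalar product
`⟨X,Y⟩_ω = ∫ e^{−iωt} Tr(ρ X* S_t Y S_t*) dt` on finite-rank operators
`X = Σ_j |u_j⟩⟨v_j|`, `Y = Σ_k |p_k⟩⟨q_k|`: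
`conj ⟨X,Y⟩_ω = ⟨Y,X⟩_ω`. -/
theorem prescalar_product_hermitian_symmetry
    {H : Type*} [NormedAddCommGroup H] [InnerProductSpace ℂ H] [CompleteSpace H]
    (S : ℝ → (H →L[ℂ] H))
    (hS0 : S 0 = 1)
    (hSadd : ∀ s t : ℝ, S (s + t) = S s * S t)
    (hSunitary : ∀ t : ℝ, S t ∈ unitary (H →L[ℂ] H))
    (hScont : ∀ x : H, Continuous fun t : ℝ => S t x)
    (ρ : H →L[ℂ] H) (hρ : ρ.IsPositive)
    (hρS : ∀ t : ℝ, ρ * S t = S t * ρ)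
    (N M : ℕ) (u v : Fin N → H) (p q : Fin M → H)
    (hintXY : Integrable fun t : ℝ =>
      ∑ j, ∑ k, ⟪u j, S t (p k)⟫_ℂ * ⟪S t (q k), ρ (v j)⟫_ℂ)
    (hintYX : Integrable fun t : ℝ =>
      ∑ k, ∑ j, ⟪p k, S t (u j)⟫_ℂ * ⟪S t (v j), ρ (q k)⟫_ℂ)
    (ω : ℝ) :
    (starRingEnd ℂ) (∫ t : ℝ, Complex.exp (-(Complex.I * ω * t)) *
        ∑ j, ∑ k, ⟪u j, S t (p k)⟫_ℂ * ⟪S t (q k), ρ (v j)⟫_ℂ) =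
      ∫ t : ℝ, Complex.exp (-(Complex.I * ω * t)) *
        ∑ k, ∑ j, ⟪p k, S t (u j)⟫_ℂ * ⟪S t (v j), ρ (q k)⟫_ℂ :=
  prescalar_product_hermitian_symmetry_general S hS0 hSadd hSunitary ρ hρ hρS N M u v p q ω
end

section
/- Let h be an integrable complex-valued function on [0,∞) and let φ : ℝ² → ℂ be continuous with compact support. Then lim_{ξ→0⁺} (1/ξ) ∫_0^∞ dt_1 ∫_0^{t_1} dt_2 φ(t_1,t_2) h((t_1 − t_2)/ξ) = (∫_0^∞ φ(t,t) dt) · (∫_0^∞ h(s) ds). -/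
/-!
Substituting `t₂ = t₁ - ξ s` turns `(1/ξ) ∫₀^{t₁} φ(t₁,t₂) h((t₁-t₂)/ξ) dt₂` into
`∫₀^{t₁/ξ} φ(t₁, t₁ - ξ s) h(s) ds`, with the factor `1/ξ` absorbed by the Jacobian. As `ξ → 0⁺`
the cutoff `t₁/ξ` goes to `∞` and `φ(t₁, t₁ - ξ s) → φ(t₁, t₁)`, so by dominated convergence (bound
`sup ‖φ‖ · ‖h(s)‖`) the inner integral tends to `φ(t₁,t₁) ∫₀^∞ h`. A second dominated convergence
in `t₁`, with bound `sup ‖φ‖ · ‖h‖₁` on the compact projection of the support of `φ`, gives the limit.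
-/

open MeasureTheory Filter
open scoped Topology

noncomputable def rescaledIntegrand (φ : ℝ × ℝ → ℂ) (h : ℝ → ℂ) (ξ t : ℝ) : ℝ → ℂ :=
  (Set.Iic (t / ξ)).indicator fun s => φ (t, t - ξ * s) * h s

theorem intervalIntegral_eq_mul_integral_rescaledIntegrand (φ : ℝ × ℝ → ℂ) (h : ℝ → ℂ)
    {ξ t : ℝ} (hξ : 0 < ξ) (ht : 0 ≤ t) :
    ∫ t₂ in (0 : ℝ)..t, φ (t, t₂) * h ((t - t₂) / ξ) =
      ξ * ∫ s in Set.Ioi 0, rescaledIntegrand φ h ξ t s := by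
  have hreflect := intervalIntegral.integral_comp_sub_left
    (fun u => φ (t, t - u) * h (u / ξ)) t (a := 0) (b := t)
  have hscale := intervalIntegral.smul_integral_comp_mul_left
    (fun u => φ (t, t - u) * h (u / ξ)) ξ (a := 0) (b := t / ξ)
  simp only [sub_sub_cancel, sub_self, sub_zero] at hreflect
  simp only [mul_zero, mul_div_cancel₀ _ hξ.ne', mul_div_cancel_left₀ _ hξ.ne'] at hscale
  rw [hreflect, ← hscale, intervalIntegral.integral_of_le (div_nonneg ht hξ.le), Complex.real_smul,
    rescaledIntegrand, setIntegral_indicator measurableSet_Iic, Set.Ioi_inter_Iic]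

theorem norm_rescaledIntegrand_le {φ : ℝ × ℝ → ℂ} {C : ℝ} (hC : ∀ p, ‖φ p‖ ≤ C)
    (h : ℝ → ℂ) (ξ t s : ℝ) : ‖rescaledIntegrand φ h ξ t s‖ ≤ C * ‖h s‖ :=
  (norm_indicator_le_norm_self _ _).trans <| by
    rw [norm_mul]; exact mul_le_mul_of_nonneg_right (hC _) (norm_nonneg _)

theorem aestronglyMeasurable_uncurry_rescaledIntegrand {φ : ℝ × ℝ → ℂ} (hφ : Continuous φ)
    {h : ℝ → ℂ} {ν : Measure ℝ} (hh : AEStronglyMeasurable h ν) (μ : Measure ℝ) (ξ : ℝ) :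
    AEStronglyMeasurable (Function.uncurry (rescaledIntegrand φ h ξ)) (μ.prod ν) := by
  have hset : MeasurableSet {p : ℝ × ℝ | p.2 ≤ p.1 / ξ} :=
    measurableSet_le measurable_snd (measurable_fst.div_const ξ)
  exact ((hφ.comp (by fun_prop)).aestronglyMeasurable.mul hh.comp_snd).indicator hset

theorem norm_integral_rescaledIntegrand_le {φ : ℝ × ℝ → ℂ} {C : ℝ} (hC : ∀ p, ‖φ p‖ ≤ C)
    {h : ℝ → ℂ} (hh : IntegrableOn h (Set.Ioi 0)) (ξ t : ℝ) :
    ‖∫ s in Set.Ioi 0, rescaledIntegrand φ h ξ t s‖ ≤ C * ∫ s in Set.Ioi 0, ‖h s‖ := by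
  rw [← integral_const_mul]
  exact norm_integral_le_of_norm_le (hh.norm.const_mul C)
    (Eventually.of_forall (norm_rescaledIntegrand_le hC h ξ t))

theorem tendsto_integral_rescaledIntegrand {φ : ℝ × ℝ → ℂ} (hφ : Continuous φ) {C : ℝ}
    (hC : ∀ p, ‖φ p‖ ≤ C) {h : ℝ → ℂ} (hh : IntegrableOn h (Set.Ioi 0)) {t : ℝ} (ht : 0 < t) :
    Tendsto (fun ξ => ∫ s in Set.Ioi 0, rescaledIntegrand φ h ξ t s) (𝓝[>] 0)
      (𝓝 (φ (t, t) * ∫ s in Set.Ioi 0, h s)) := by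
  rw [← integral_const_mul]
  refine tendsto_integral_filter_of_dominated_convergence (fun s => C * ‖h s‖)
    (Eventually.of_forall fun ξ => ?_)
    (Eventually.of_forall fun ξ => Eventually.of_forall (norm_rescaledIntegrand_le hC h ξ t))
    (hh.norm.const_mul C) ?_
  · exact ((hφ.comp (by fun_prop)).aestronglyMeasurable.mul hh.aestronglyMeasurable).indicator
      measurableSet_Iic
  · rw [ae_restrict_iff' measurableSet_Ioi]
    refine Eventually.of_forall fun s (hs : 0 < s) => ?_
    have hcut : ∀ᶠ ξ in 𝓝[>] 0, rescaledIntegrand φ h ξ t s = φ (t, t - ξ * s) * h s := by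
      filter_upwards [Ioo_mem_nhdsGT (div_pos ht hs)] with ξ ⟨hξ, hξs⟩
      refine Set.indicator_of_mem ?_ _
      rw [Set.mem_Iic, le_div_iff₀ hξ, mul_comm]
      exact ((lt_div_iff₀ hs).1 hξs).le
    refine Tendsto.congr' (EventuallyEq.symm hcut) (Tendsto.mul_const _ ?_)
    refine ((hφ.tendsto _).comp ?_).mono_left nhdsWithin_le_nhds
    exact (by fun_prop : Continuous fun ξ : ℝ => (t, t - ξ * s)).tendsto' 0 (t, t) (by simp)

theorem tendsto_integral_integral_rescaledIntegrand {φ : ℝ × ℝ → ℂ} (hφ : Continuous φ)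
    (hφc : HasCompactSupport φ) {h : ℝ → ℂ} (hh : IntegrableOn h (Set.Ioi 0)) :
    Tendsto (fun ξ => ∫ t in Set.Ioi 0, ∫ s in Set.Ioi 0, rescaledIntegrand φ h ξ t s) (𝓝[>] 0)
      (𝓝 ((∫ t in Set.Ioi 0, φ (t, t)) * ∫ s in Set.Ioi 0, h s)) := by
  obtain ⟨C, hC⟩ := hφc.exists_bound_of_continuous hφ
  set K := Prod.fst '' tsupport φ
  have hK : IsCompact K := hφc.image continuous_fst
  have hvanish (ξ t : ℝ) (ht : t ∉ K) : ∫ s in Set.Ioi 0, rescaledIntegrand φ h ξ t s = 0 := by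
    have hφt (u : ℝ) : φ (t, u) = 0 := image_eq_zero_of_notMem_tsupport fun hu => ht ⟨_, hu, rfl⟩
    simp [rescaledIntegrand, hφt]
  rw [← integral_mul_const]
  refine tendsto_integral_filter_of_dominated_convergence
    (K.indicator fun _ => C * ∫ s in Set.Ioi 0, ‖h s‖)
    (Eventually.of_forall fun ξ => (aestronglyMeasurable_uncurry_rescaledIntegrand hφ
      hh.aestronglyMeasurable _ ξ).integral_prod_right')
    (Eventually.of_forall fun ξ => Eventually.of_forall fun t => ?_)
    ((integrableOn_const hK.measure_lt_top.ne).integrable_indicator hK.measurableSet).restrict ?_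
  · by_cases ht : t ∈ K
    · simpa [Set.indicator_of_mem ht] using norm_integral_rescaledIntegrand_le hC hh ξ t
    · simp [Set.indicator_of_notMem ht, hvanish ξ t ht]
  · rw [ae_restrict_iff' measurableSet_Ioi]
    exact Eventually.of_forall fun t ht => tendsto_integral_rescaledIntegrand hφ hC hh ht

/-- The basic scaling lemma of the low density limit: for `h` integrable on `[0,∞)`
and `φ` continuous with compact support,
`(1/ξ) ∫_0^∞ dt₁ ∫_0^{t₁} dt₂ φ(t₁,t₂) h((t₁−t₂)/ξ) → (∫_0^∞ φ(t,t) dt)(∫_0^∞ h(s) ds)`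
as `ξ → 0⁺`; i.e. `(1/ξ) h((t₁−t₂)/ξ)` converges on the simplex `t₁ ≥ t₂ ≥ 0` to
`δ₊(t₁−t₂) ∫_0^∞ h`. -/
theorem lowDensity_scaling_lemma
    (h : ℝ → ℂ) (hh : IntegrableOn h (Set.Ici (0 : ℝ)))
    (φ : ℝ × ℝ → ℂ) (hφ : Continuous φ) (hφc : HasCompactSupport φ) :
    Tendsto
      (fun ξ : ℝ => (1 / ξ : ℂ) *
        ∫ t₁ in Set.Ioi (0 : ℝ), ∫ t₂ in (0 : ℝ)..t₁, φ (t₁, t₂) * h ((t₁ - t₂) / ξ))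
      (𝓝[>] 0)
      (𝓝 ((∫ t in Set.Ioi (0 : ℝ), φ (t, t)) * ∫ s in Set.Ioi (0 : ℝ), h s)) := by
  refine (tendsto_integral_integral_rescaledIntegrand hφ hφc
    (hh.mono_set Set.Ioi_subset_Ici_self)).congr' ?_
  filter_upwards [self_mem_nhdsWithin] with ξ (hξ : 0 < ξ)
  have hξ' : (ξ : ℂ) ≠ 0 := by exact_mod_cast hξ.ne'
  rw [← integral_const_mul]
  refine setIntegral_congr_fun measurableSet_Ioi fun t (ht : 0 < t) => ?_
  rw [intervalIntegral_eq_mul_integral_rescaledIntegrand φ h hξ ht.le, one_div,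
    inv_mul_cancel_left₀ hξ']
end

section
/- Let h be an integrable complex-valued function on ℝ, let ω, ω′ ∈ ℝ, and let φ : ℝ² → ℂ be continuous with compact support. Then lim_{ξ→0⁺} (1/ξ) ∫_{ℝ²} φ(t,t′) e^{i(ωt − ω′t′)/ξ} h((t′ − t)/ξ) dt dt′ equals (∫_ℝ φ(t,t) dt) · (∫_ℝ e^{−iωs} h(s) ds) if ω = ω′, and equals 0 if ω ≠ ω′. -/
open MeasureTheory Filter
open scoped Topology

/-!
After the substitution `t' = t + ξ s` the rescaled integral becomes `∫ g(s) D_ξ(s) ds` with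
`g(s) = e^{-iω's} h(s)` and `D_ξ(s) = ∫ e^{i(ω-ω')t/ξ} φ(t, t + ξ s) dt`. By continuity of
translation in `L¹`, `D_ξ(s)` differs by `o(1)` from `∫ e^{i(ω-ω')t/ξ} φ(t, t) dt`, which is
`∫ φ(t, t) dt` if `ω = ω'` and tends to `0` by the Riemann–Lebesgue lemma otherwise. Since
`|D_ξ(s)|` is bounded uniformly in `ξ` and `s`, dominated convergence in `s` concludes.
-/

theorem map_fst_add_mul_snd_volume {c : ℝ} (hc : c ≠ 0) :
    Measure.map (fun p : ℝ × ℝ => (p.1, p.1 + c * p.2)) volume =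
      ENNReal.ofReal |c⁻¹| • volume := by
  have hscale : Measure.map (Prod.map id (c * ·)) (volume : Measure (ℝ × ℝ)) =
      ENNReal.ofReal |c⁻¹| • volume := by
    rw [Measure.volume_eq_prod, ← Measure.map_prod_map _ _ measurable_id
      (measurable_const_mul c), Measure.map_id, Real.map_volume_mul_left hc,
      Measure.prod_smul_right]
  calc Measure.map (fun p : ℝ × ℝ => (p.1, p.1 + c * p.2)) volume
      = Measure.map (fun p : ℝ × ℝ => (p.1, p.1 + p.2))
          (Measure.map (Prod.map id (c * ·)) volume) := by
        rw [Measure.map_map (by fun_prop) (by fun_prop)]; rfl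
    _ = ENNReal.ofReal |c⁻¹| • volume := by
        rw [hscale, Measure.map_smul, Measure.volume_eq_prod,
          (measurePreserving_prod_add volume volume).map_eq]

theorem integral_comp_fst_add_mul_snd {E : Type*} [NormedAddCommGroup E] [NormedSpace ℝ E]
    (F : ℝ × ℝ → E) {c : ℝ} (hc : c ≠ 0) :
    ∫ p : ℝ × ℝ, F (p.1, p.1 + c * p.2) = |c⁻¹| • ∫ p, F p := by
  let L : ℝ × ℝ ≃ₜ ℝ × ℝ :=
    ((Homeomorph.refl ℝ).prodCongr (Homeomorph.mulLeft₀ c hc)).trans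
      (Homeomorph.shearAddRight ℝ)
  have hL : ⇑L = fun p : ℝ × ℝ => (p.1, p.1 + c * p.2) := rfl
  have hmap := L.measurableEmbedding.integral_map (μ := volume) F
  rw [hL, map_fst_add_mul_snd_volume hc, integral_smul_measure,
    ENNReal.toReal_ofReal (abs_nonneg _)] at hmap
  exact hmap.symm

theorem tendsto_integral_exp_mul_smul_cocompact {E : Type*} [NormedAddCommGroup E]
    [NormedSpace ℂ E] (ψ : ℝ → E) :
    Tendsto (fun x : ℝ => ∫ t : ℝ, Complex.exp (Complex.I * x * t) • ψ t) (cocompact ℝ) (𝓝 0) := by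
  have h2π : (2 * Real.pi)⁻¹ ≠ 0 := by positivity
  have hw : Tendsto (fun x : ℝ => -((2 * Real.pi)⁻¹ * x)) (cocompact ℝ) (cocompact ℝ) :=
    ((Homeomorph.mulLeft₀ _ h2π).trans (Homeomorph.neg ℝ)).isClosedEmbedding.tendsto_cocompact
  refine ((Real.tendsto_integral_exp_smul_cocompact ψ).comp hw).congr fun x => ?_
  refine integral_congr_ae (ae_of_all _ fun t => ?_)
  simp only [Circle.smul_def, Real.fourierChar_apply]
  congr 2
  push_cast
  field_simp

theorem tendsto_const_div_nhdsNE_zero_cocompact {a : ℝ} (ha : a ≠ 0) :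
    Tendsto (fun ξ : ℝ => a / ξ) (𝓝[≠] 0) (cocompact ℝ) := by
  simp_rw [div_eq_mul_inv]
  exact (Homeomorph.mulLeft₀ a ha).isClosedEmbedding.tendsto_cocompact.comp
    (Metric.cobounded_eq_cocompact (α := ℝ) ▸ tendsto_inv₀_nhdsNE_zero)

theorem tendsto_integral_exp_const_div_smul_nhdsNE_zero {E : Type*} [NormedAddCommGroup E]
    [NormedSpace ℂ E] (ψ : ℝ → E) (a : ℝ) :
    Tendsto (fun ξ : ℝ => ∫ t : ℝ, Complex.exp (Complex.I * ↑(a / ξ) * t) • ψ t) (𝓝[≠] 0)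
      (𝓝 (if a = 0 then ∫ t, ψ t else 0)) := by
  split_ifs with ha
  · simp [ha]
  · exact (tendsto_integral_exp_mul_smul_cocompact ψ).comp
      (tendsto_const_div_nhdsNE_zero_cocompact ha)

theorem HasCompactSupport.exists_integrable_bound_fst {α β E : Type*} [TopologicalSpace α]
    [T2Space α] [MeasurableSpace α] [OpensMeasurableSpace α] [TopologicalSpace β]
    [NormedAddCommGroup E] {φ : α × β → E} (hφc : HasCompactSupport φ) (hφ : Continuous φ)
    (μ : Measure α) [IsFiniteMeasureOnCompacts μ] :
    ∃ B : α → ℝ, Integrable B μ ∧ ∀ p, ‖φ p‖ ≤ B p.1 := by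
  obtain ⟨C, hC⟩ := hφc.exists_bound_of_continuous hφ
  have hK : IsCompact (Prod.fst '' tsupport φ) := hφc.image continuous_fst
  refine ⟨(Prod.fst '' tsupport φ).indicator fun _ => C,
    (integrable_indicator_iff hK.isClosed.measurableSet).2
      (integrableOn_const hK.measure_lt_top.ne), fun p => ?_⟩
  by_cases hp : p.1 ∈ Prod.fst '' tsupport φ
  · simpa [Set.indicator_of_mem hp] using hC p
  · have : p ∉ tsupport φ := fun h => hp ⟨p, h, rfl⟩
    simp [Set.indicator_of_notMem hp, image_eq_zero_of_notMem_tsupport this]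

theorem norm_exp_I_mul_mul (x t : ℝ) : ‖Complex.exp (Complex.I * x * t)‖ = 1 := by
  rw [mul_assoc, ← Complex.ofReal_mul, Complex.norm_exp_I_mul_ofReal]

section DiagonalSlice

variable {E : Type*} [NormedAddCommGroup E]

theorem tendsto_integral_norm_sub_diagonalSlice {φ : ℝ × ℝ → E} {B : ℝ → ℝ}
    (hφ : Continuous φ) (hB : Integrable B) (hφB : ∀ p, ‖φ p‖ ≤ B p.1) :
    Tendsto (fun ε : ℝ => ∫ t, ‖φ (t, t + ε) - φ (t, t)‖) (𝓝 0) (𝓝 0) := by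
  have hcont : Continuous fun ε : ℝ => ∫ t, ‖φ (t, t + ε) - φ (t, t)‖ :=
    continuous_of_dominated (bound := fun t => 2 * B t)
      (fun ε => (by fun_prop : Continuous _).aestronglyMeasurable)
      (fun ε => ae_of_all _ fun t => by
        rw [norm_norm, two_mul]
        exact (norm_sub_le _ _).trans (add_le_add (hφB _) (by simpa using hφB (t, t))))
      (hB.const_mul 2) (ae_of_all _ fun t => by fun_prop)
  simpa using hcont.tendsto 0

variable [NormedSpace ℂ E]

noncomputable def diagonalSliceFourier (φ : ℝ × ℝ → E) (ε x : ℝ) : E :=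
  ∫ t : ℝ, Complex.exp (Complex.I * x * t) • φ (t, t + ε)

variable {φ : ℝ × ℝ → E} {B : ℝ → ℝ}

theorem integrable_exp_smul_diagonalSlice (hφ : Continuous φ) (hB : Integrable B)
    (hφB : ∀ p, ‖φ p‖ ≤ B p.1) (ε x : ℝ) :
    Integrable fun t : ℝ => Complex.exp (Complex.I * x * t) • φ (t, t + ε) :=
  hB.mono' (by fun_prop) (ae_of_all _ fun t => by
    simpa only [norm_smul, norm_exp_I_mul_mul, one_mul] using hφB (t, t + ε))

theorem norm_diagonalSliceFourier_le (hB : Integrable B) (hφB : ∀ p, ‖φ p‖ ≤ B p.1)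
    (ε x : ℝ) : ‖diagonalSliceFourier φ ε x‖ ≤ ∫ t, B t :=
  norm_integral_le_of_norm_le hB (ae_of_all _ fun t => by
    simpa only [norm_smul, norm_exp_I_mul_mul, one_mul] using hφB (t, t + ε))

theorem continuous_diagonalSliceFourier (hφ : Continuous φ) (hB : Integrable B)
    (hφB : ∀ p, ‖φ p‖ ≤ B p.1) (x : ℝ) :
    Continuous fun ε => diagonalSliceFourier φ ε x :=
  continuous_of_dominated (fun ε => (by fun_prop : Continuous _).aestronglyMeasurable)
    (fun ε => ae_of_all _ fun t => by
      simpa only [norm_smul, norm_exp_I_mul_mul, one_mul] using hφB (t, t + ε))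
    hB (ae_of_all _ fun t => by fun_prop)

theorem norm_diagonalSliceFourier_sub_le (hφ : Continuous φ) (hB : Integrable B)
    (hφB : ∀ p, ‖φ p‖ ≤ B p.1) (ε ε' x : ℝ) :
    ‖diagonalSliceFourier φ ε x - diagonalSliceFourier φ ε' x‖ ≤
      ∫ t, ‖φ (t, t + ε) - φ (t, t + ε')‖ := by
  rw [diagonalSliceFourier, diagonalSliceFourier, ← integral_sub
    (integrable_exp_smul_diagonalSlice hφ hB hφB ε x)
    (integrable_exp_smul_diagonalSlice hφ hB hφB ε' x)]
  refine (norm_integral_le_integral_norm _).trans_eq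
    (integral_congr_ae (ae_of_all _ fun t => ?_))
  simp only [← smul_sub, norm_smul, norm_exp_I_mul_mul, one_mul]

theorem tendsto_diagonalSliceFourier (hφ : Continuous φ) (hB : Integrable B)
    (hφB : ∀ p, ‖φ p‖ ≤ B p.1) (a s : ℝ) :
    Tendsto (fun ξ : ℝ => diagonalSliceFourier φ (ξ * s) (a / ξ)) (𝓝[≠] 0)
      (𝓝 (if a = 0 then ∫ t, φ (t, t) else 0)) := by
  have hdiag : Tendsto (fun ξ : ℝ => diagonalSliceFourier φ 0 (a / ξ)) (𝓝[≠] 0)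
      (𝓝 (if a = 0 then ∫ t, φ (t, t) else 0)) := by
    simpa only [diagonalSliceFourier, add_zero] using
      tendsto_integral_exp_const_div_smul_nhdsNE_zero (fun t => φ (t, t)) a
  have hshift : Tendsto (fun ξ : ℝ => ξ * s) (𝓝[≠] 0) (𝓝 0) :=
    tendsto_nhdsWithin_of_tendsto_nhds (by simpa using (continuous_mul_const s).tendsto 0)
  have hsub : Tendsto (fun ξ : ℝ => diagonalSliceFourier φ (ξ * s) (a / ξ) -
      diagonalSliceFourier φ 0 (a / ξ)) (𝓝[≠] 0) (𝓝 0) :=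
    squeeze_zero_norm (fun ξ => by
        simpa only [Function.comp_apply, add_zero] using
          norm_diagonalSliceFourier_sub_le hφ hB hφB (ξ * s) 0 (a / ξ))
      ((tendsto_integral_norm_sub_diagonalSlice hφ hB hφB).comp hshift)
  simpa using hsub.add hdiag

theorem tendsto_integral_smul_diagonalSliceFourier [CompleteSpace E] (hφ : Continuous φ)
    (hB : Integrable B) (hφB : ∀ p, ‖φ p‖ ≤ B p.1) (a : ℝ) {g : ℝ → ℂ} (hg : Integrable g) :
    Tendsto (fun ξ : ℝ => ∫ s, g s • diagonalSliceFourier φ (ξ * s) (a / ξ)) (𝓝[≠] 0)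
      (𝓝 ((∫ s, g s) • if a = 0 then ∫ t, φ (t, t) else 0)) := by
  rw [← integral_smul_const]
  refine tendsto_integral_filter_of_dominated_convergence (fun s => ‖g s‖ * ∫ t, B t)
    (Eventually.of_forall fun ξ => hg.aestronglyMeasurable.smul
      ((continuous_diagonalSliceFourier hφ hB hφB _).comp
        (continuous_const_mul ξ)).aestronglyMeasurable)
    (Eventually.of_forall fun ξ => ae_of_all _ fun s => by
      rw [norm_smul]
      exact mul_le_mul_of_nonneg_left (norm_diagonalSliceFourier_le hB hφB _ _) (norm_nonneg _))
    (hg.norm.mul_const _)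
    (ae_of_all _ fun s => (tendsto_diagonalSliceFourier hφ hB hφB a s).const_smul (g s))

end DiagonalSlice

theorem rescaled_two_point_integral_eq {φ : ℝ × ℝ → ℂ} (hφ : Continuous φ) {B : ℝ → ℝ}
    (hB : Integrable B) (hφB : ∀ p, ‖φ p‖ ≤ B p.1) {h : ℝ → ℂ} (hh : Integrable h)
    (ω ω' : ℝ) {ξ : ℝ} (hξ : 0 < ξ) :
    (1 / ξ : ℂ) * ∫ p : ℝ × ℝ, φ p *
        Complex.exp (Complex.I * (ω * p.1 - ω' * p.2) / ξ) * h ((p.2 - p.1) / ξ) =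
      ∫ s : ℝ, (Complex.exp (-(Complex.I * ω' * s)) * h s) •
        diagonalSliceFourier φ (ξ * s) ((ω - ω') / ξ) := by
  set G : ℝ × ℝ → ℂ := fun p => (Complex.exp (-(Complex.I * ω' * p.2)) * h p.2) •
    (Complex.exp (Complex.I * ↑((ω - ω') / ξ) * p.1) • φ (p.1, p.1 + ξ * p.2))
  have hG : Integrable G (volume.prod volume) := by
    have hcont₁ : Continuous fun p : ℝ × ℝ => Complex.exp (-(Complex.I * ω' * p.2)) := by
      fun_prop
    have hcont₂ : Continuous fun p : ℝ × ℝ =>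
        Complex.exp (Complex.I * ↑((ω - ω') / ξ) * p.1) • φ (p.1, p.1 + ξ * p.2) := by
      fun_prop
    refine (hB.mul_prod hh.norm).mono'
      ((hcont₁.aestronglyMeasurable.mul hh.1.comp_snd).smul hcont₂.aestronglyMeasurable)
      (ae_of_all _ fun p => ?_)
    simpa [G, Complex.norm_exp, mul_comm] using
      mul_le_mul_of_nonneg_left (hφB (p.1, p.1 + ξ * p.2)) (norm_nonneg (h p.2))
  calc (1 / ξ : ℂ) * ∫ p : ℝ × ℝ, φ p *
        Complex.exp (Complex.I * (ω * p.1 - ω' * p.2) / ξ) * h ((p.2 - p.1) / ξ)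
      = ∫ p : ℝ × ℝ, G p := by
        rw [← Complex.ofReal_one, ← Complex.ofReal_div, one_div, ← abs_of_pos (inv_pos.2 hξ),
          ← Complex.real_smul, ← integral_comp_fst_add_mul_snd _ hξ.ne']
        refine integral_congr_ae (ae_of_all _ fun p => ?_)
        have hs : (p.1 + ξ * p.2 - p.1) / ξ = p.2 := by field_simp; ring
        have he : Complex.I * (ω * p.1 - ω' * ↑(p.1 + ξ * p.2)) / ξ =
            -(Complex.I * ω' * p.2) + Complex.I * ↑((ω - ω') / ξ) * p.1 := by
          have hξ' : (ξ : ℂ) ≠ 0 := by exact_mod_cast hξ.ne'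
          push_cast
          field_simp
          ring
        simp only [G, hs, he, Complex.exp_add, smul_eq_mul]
        ring
    _ = ∫ s : ℝ, ∫ t : ℝ, G (t, s) := by
        rw [Measure.volume_eq_prod]
        exact integral_prod_symm G hG
    _ = ∫ s : ℝ, (Complex.exp (-(Complex.I * ω' * s)) * h s) •
          diagonalSliceFourier φ (ξ * s) ((ω - ω') / ξ) := by
        simp only [G, integral_smul, diagonalSliceFourier]

/-- Scalar form of the convergence of the two-point functions of the rescaled
collective fields in the low density limit: for `h` integrable on `ℝ`, `ω, ω' ∈ ℝ`
and `φ` continuous with compact support,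
`(1/ξ) ∫_{ℝ²} φ(t,t') e^{i(ωt−ω't')/ξ} h((t'−t)/ξ) dt dt'` converges as `ξ → 0⁺` to
`δ_{ω,ω'} (∫ φ(t,t) dt)(∫ e^{−iωs} h(s) ds)`. -/
theorem lowDensity_two_point_function_limit
    (h : ℝ → ℂ) (hh : Integrable h)
    (ω ω' : ℝ)
    (φ : ℝ × ℝ → ℂ) (hφ : Continuous φ) (hφc : HasCompactSupport φ) :
    Tendsto
      (fun ξ : ℝ => (1 / ξ : ℂ) *
        ∫ p : ℝ × ℝ, φ p *
          Complex.exp (Complex.I * (ω * p.1 - ω' * p.2) / ξ) * h ((p.2 - p.1) / ξ))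
      (𝓝[>] 0)
      (𝓝 (if ω = ω' then
            (∫ t : ℝ, φ (t, t)) * ∫ s : ℝ, Complex.exp (-(Complex.I * ω * s)) * h s
          else 0)) := by
  obtain ⟨B, hB, hφB⟩ := hφc.exists_integrable_bound_fst hφ volume
  have hg : Integrable fun s : ℝ => Complex.exp (-(Complex.I * ω' * s)) * h s :=
    hh.bdd_mul (c := 1) (by fun_prop) (ae_of_all _ fun s => by simp [Complex.norm_exp])
  have hval : ((∫ s : ℝ, Complex.exp (-(Complex.I * ω' * s)) * h s) •
      if ω - ω' = 0 then ∫ t : ℝ, φ (t, t) else 0) =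
      if ω = ω' then
        (∫ t : ℝ, φ (t, t)) * ∫ s : ℝ, Complex.exp (-(Complex.I * ω * s)) * h s
      else 0 := by
    by_cases hω : ω = ω' <;> simp [hω, sub_eq_zero, mul_comm]
  rw [← hval]
  exact ((tendsto_integral_smul_diagonalSliceFourier hφ hB hφB (ω - ω') hg).mono_left
    (nhdsWithin_mono _ fun ξ hξ => ne_of_gt hξ)).congr' (eventually_nhdsWithin_of_forall
      fun ξ hξ => (rescaled_two_point_integral_eq hφ hB hφB hh ω ω' hξ).symm)
end

section
/- Let n ≥ 2, let h_1,…,h_{n−1} be integrable complex-valued functions on [0,∞), and let t > 0. Then lim_{ξ→0⁺} ξ^{−(n−1)} ∫_0^t dt_1 ∫_0^{t_1} dt_2 … ∫_0^{t_{n−1}} dt_n Π_{j=1}^{n−1} h_j((t_j − t_{j+1})/ξ) = t · Π_{j=1}^{n−1} ∫_0^∞ h_j(s) ds. -/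
open MeasureTheory Filter intervalIntegral
open scoped Topology

/-- The iterated simplex integral with a chain of rescaled two-point kernels:
`chainKernelIntegral h ξ m s = ∫_0^s du h_{m-1}((s−u)/ξ) ⋅ chainKernelIntegral h ξ (m-1) u`,
so that `∫_0^t chainKernelIntegral h ξ (n-1) t₁ dt₁` is the `n`-fold simplex integral
`∫_0^t dt₁ ∫_0^{t₁} dt₂ ⋯ ∫_0^{t_{n-1}} dt_n Π_{j=1}^{n-1} h_j((t_j − t_{j+1})/ξ)`
(with the kernels relabelled by `j ↦ n−1−j`). -/
noncomputable def chainKernelIntegral (h : ℕ → ℝ → ℂ) (ξ : ℝ) : ℕ → ℝ → ℂ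
  | 0, _ => 1
  | (m + 1), s => ∫ u in (0 : ℝ)..s, h m ((s - u) / ξ) * chainKernelIntegral h ξ m u

/-!
Write `K_m = chainKernelIntegral h ξ m`. The substitution `u = s - ξ v` in each kernel
integral gives `ξ^{-(m+1)} K_{m+1}(x) = ∫_0^{x/ξ} h_m(v) ξ^{-m} K_m(x - ξ v) dv`, and the bound
`‖K_m‖ ≤ ξ^m ∏_j ‖h_j‖₁` on `[0, ∞)` dominates the integrand by a multiple of `‖h_m‖`.
By induction and dominated convergence, `ξ^{-m} K_m(x(ξ)) → ∏_j ∫_0^∞ h_j` whenever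
`x(ξ) → x₀ > 0`; the argument is allowed to move with `ξ` because the inductive step evaluates
`K_m` at `x - ξ v`. A last dominated convergence over `[0, t]` produces the factor `t`.
Replacing each `h_j` by a strongly measurable representative changes nothing on `[0, ∞)`.
-/

open Set

theorem MeasureTheory.StronglyMeasurable.intervalIntegral_prod_right' {E : Type*}
    [NormedAddCommGroup E] [NormedSpace ℝ E] {f : ℝ × ℝ → E} (hf : StronglyMeasurable f)
    {a b : ℝ → ℝ} (ha : Measurable a) (hb : Measurable b) :
    StronglyMeasurable fun s => ∫ u in a s..b s, f (s, u) := by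
  have hIoc : ∀ l r : ℝ → ℝ, Measurable l → Measurable r →
      StronglyMeasurable fun s => ∫ u in Ioc (l s) (r s), f (s, u) := by
    intro l r hl hr
    have hset : MeasurableSet {p : ℝ × ℝ | p.2 ∈ Ioc (l p.1) (r p.1)} :=
      (_root_.measurableSet_lt (hl.comp measurable_fst) measurable_snd).inter
        (_root_.measurableSet_le measurable_snd (hr.comp measurable_fst))
    convert (hf.indicator hset).integral_prod_right' (ν := volume) using 2 with s
    rw [← integral_indicator measurableSet_Ioc]
    rfl
  exact (hIoc a b ha hb).sub (hIoc b a hb ha)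

variable {h g : ℕ → ℝ → ℂ} {ξ s : ℝ} {m : ℕ}

theorem stronglyMeasurable_chainKernelIntegral (hm : ∀ j, StronglyMeasurable (h j)) (ξ : ℝ)
    (m : ℕ) : StronglyMeasurable (chainKernelIntegral h ξ m) := by
  induction m with
  | zero => exact stronglyMeasurable_const
  | succ m ih =>
    exact StronglyMeasurable.intervalIntegral_prod_right' (f := fun p : ℝ × ℝ =>
      h m ((p.1 - p.2) / ξ) * chainKernelIntegral h ξ m p.2)
      (((hm m).comp_measurable ((measurable_fst.sub measurable_snd).div_const ξ)).mul
        (ih.comp_measurable measurable_snd)) measurable_const measurable_id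

theorem chainKernelIntegral_succ_eq_rescaled (hξ : 0 < ξ) (hs : 0 ≤ s) (m : ℕ) :
    chainKernelIntegral h ξ (m + 1) s =
      ξ * ∫ v in Ioc 0 (s / ξ), h m v * chainKernelIntegral h ξ m (s - ξ * v) := by
  set F := fun v => h m v * chainKernelIntegral h ξ m (s - ξ * v)
  have hF : ∀ u, h m ((s - u) / ξ) * chainKernelIntegral h ξ m u = F (s / ξ - u / ξ) := by
    intro u
    simp only [F, sub_div, mul_sub, mul_div_cancel₀ _ hξ.ne', sub_sub_cancel]
  rw [chainKernelIntegral, integral_congr fun u _ => hF u, integral_comp_sub_div F hξ.ne',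
    sub_self, zero_div, sub_zero, integral_of_le (div_nonneg hs hξ.le), Complex.real_smul]

theorem norm_chainKernelIntegral_le (hint : ∀ j, IntegrableOn (h j) (Ici 0)) (hξ : 0 < ξ)
    (m : ℕ) (hs : 0 ≤ s) :
    ‖chainKernelIntegral h ξ m s‖ ≤ ξ ^ m * ∏ j ∈ Finset.range m, ∫ v in Ioi 0, ‖h j v‖ := by
  induction m generalizing s with
  | zero => simp [chainKernelIntegral]
  | succ m ih =>
    set C := ξ ^ m * ∏ j ∈ Finset.range m, ∫ v in Ioi 0, ‖h j v‖
    have hnorm : IntegrableOn (fun v => ‖h m v‖ * C) (Ioi 0) :=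
      (IntegrableOn.mono_set (hint m).norm Ioi_subset_Ici_self).mul_const C
    have hC : 0 ≤ C := (norm_nonneg _).trans (ih le_rfl)
    calc ‖chainKernelIntegral h ξ (m + 1) s‖
        = ξ * ‖∫ v in Ioc 0 (s / ξ), h m v * chainKernelIntegral h ξ m (s - ξ * v)‖ := by
          rw [chainKernelIntegral_succ_eq_rescaled hξ hs, norm_mul, Complex.norm_real,
            Real.norm_of_nonneg hξ.le]
      _ ≤ ξ * ∫ v in Ioc 0 (s / ξ), ‖h m v‖ * C := by
          gcongr
          refine norm_integral_le_of_norm_le (hnorm.mono_set Ioc_subset_Ioi_self) ?_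
          refine (ae_restrict_iff' measurableSet_Ioc).2 (.of_forall fun v hv => ?_)
          rw [norm_mul]
          gcongr
          exact ih (sub_nonneg.2 ((le_div_iff₀' hξ).1 hv.2))
      _ ≤ ξ * ∫ v in Ioi 0, ‖h m v‖ * C := by
          refine mul_le_mul_of_nonneg_left ?_ hξ.le
          exact setIntegral_mono_set hnorm (.of_forall fun v => by positivity)
            Ioc_subset_Ioi_self.eventuallyLE
      _ = ξ ^ (m + 1) * ∏ j ∈ Finset.range (m + 1), ∫ v in Ioi 0, ‖h j v‖ := by
          rw [MeasureTheory.integral_mul_const, Finset.prod_range_succ, pow_succ]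
          ring

theorem chainKernelIntegral_congr_ae (hξ : 0 < ξ)
    (hhg : ∀ j < m, h j =ᵐ[volume.restrict (Ici 0)] g j) (hs : 0 ≤ s) :
    chainKernelIntegral h ξ m s = chainKernelIntegral g ξ m s := by
  induction m generalizing s with
  | zero => rfl
  | succ m ih =>
    rw [chainKernelIntegral_succ_eq_rescaled hξ hs, chainKernelIntegral_succ_eq_rescaled hξ hs]
    congr 1
    refine integral_congr_ae ?_
    filter_upwards [ae_restrict_of_ae_restrict_of_subset
        (Ioc_subset_Ioi_self.trans Ioi_subset_Ici_self) (hhg m m.lt_add_one),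
      ae_restrict_mem measurableSet_Ioc] with v hv hmem
    rw [hv, ih (fun j hj => hhg j (hj.trans m.lt_add_one))
      (sub_nonneg.2 ((le_div_iff₀' hξ).1 hmem.2))]

theorem norm_inv_pow_mul_chainKernelIntegral_le (hint : ∀ j, IntegrableOn (h j) (Ici 0))
    (hξ : 0 < ξ) (m : ℕ) (hs : 0 ≤ s) :
    ‖((ξ : ℂ) ^ m)⁻¹ * chainKernelIntegral h ξ m s‖ ≤
      ∏ j ∈ Finset.range m, ∫ v in Ioi 0, ‖h j v‖ := by
  rw [norm_mul, norm_inv, norm_pow, Complex.norm_real, Real.norm_of_nonneg hξ.le,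
    inv_mul_le_iff₀ (by positivity)]
  exact norm_chainKernelIntegral_le hint hξ m hs

theorem tendsto_inv_pow_mul_chainKernelIntegral (hm : ∀ j, StronglyMeasurable (h j))
    (hint : ∀ j, IntegrableOn (h j) (Ici 0)) (m : ℕ) {x : ℝ → ℝ} {x₀ : ℝ} (hx₀ : 0 < x₀)
    (hx : Tendsto x (𝓝[>] 0) (𝓝 x₀)) :
    Tendsto (fun ξ : ℝ => ((ξ : ℂ) ^ m)⁻¹ * chainKernelIntegral h ξ m (x ξ)) (𝓝[>] 0)
      (𝓝 (∏ j ∈ Finset.range m, ∫ s in Ioi 0, h j s)) := by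
  induction m generalizing x with
  | zero => simp [chainKernelIntegral]
  | succ m ih =>
    set F : ℝ → ℝ → ℂ := fun ξ => (Ioc 0 (x ξ / ξ)).indicator
      fun s => h m s * (((ξ : ℂ) ^ m)⁻¹ * chainKernelIntegral h ξ m (x ξ - ξ * s))
    have hpos : ∀ᶠ ξ in 𝓝[>] 0, 0 < ξ ∧ 0 < x ξ :=
      eventually_mem_nhdsWithin.and (hx.eventually (lt_mem_nhds hx₀))
    have hF : ∀ᶠ ξ in 𝓝[>] 0, ∫ s in Ioi 0, F ξ s =
        ((ξ : ℂ) ^ (m + 1))⁻¹ * chainKernelIntegral h ξ (m + 1) (x ξ) := by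
      filter_upwards [hpos] with ξ ⟨hξ, hxξ⟩
      have hξC : (ξ : ℂ) ≠ 0 := by exact_mod_cast hξ.ne'
      rw [chainKernelIntegral_succ_eq_rescaled hξ hxξ.le, pow_succ, mul_inv, mul_assoc,
        inv_mul_cancel_left₀ hξC, ← MeasureTheory.integral_const_mul,
        setIntegral_indicator measurableSet_Ioc, inter_eq_self_of_subset_right Ioc_subset_Ioi_self]
      congr 1 with s
      ring
    have hlim : ∀ s > 0, Tendsto (F · s) (𝓝[>] 0)
        (𝓝 (h m s * ∏ j ∈ Finset.range m, ∫ s in Ioi 0, h j s)) := by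
      intro s hs
      have hxs : Tendsto (fun ξ => x ξ - ξ * s) (𝓝[>] 0) (𝓝 x₀) := by
        simpa using hx.sub (tendsto_nhdsWithin_of_tendsto_nhds (tendsto_id.mul_const s))
      refine ((ih hxs).const_mul (h m s)).congr' ?_
      filter_upwards [self_mem_nhdsWithin, hxs.eventually (lt_mem_nhds hx₀)] with ξ hξ hxsξ
      have hmem : s ∈ Ioc 0 (x ξ / ξ) := by
        rw [mem_Ioc, le_div_iff₀' hξ]
        exact ⟨hs, by linarith⟩
      simp only [F, indicator_of_mem hmem]
    have hdom := tendsto_integral_filter_of_dominated_convergence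
      (μ := volume.restrict (Ioi 0)) (F := F)
      (fun s => ‖h m s‖ * ∏ j ∈ Finset.range m, ∫ v in Ioi 0, ‖h j v‖) ?_ ?_ ?_
      ((ae_restrict_iff' measurableSet_Ioi).2 (.of_forall hlim))
    · rw [MeasureTheory.integral_mul_const, mul_comm, ← Finset.prod_range_succ] at hdom
      exact hdom.congr' hF
    · refine .of_forall fun ξ => StronglyMeasurable.aestronglyMeasurable ?_
      refine StronglyMeasurable.indicator ?_ measurableSet_Ioc
      exact (hm m).mul (stronglyMeasurable_const.mul
        ((stronglyMeasurable_chainKernelIntegral hm ξ m).comp_measurable (by fun_prop)))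
    · filter_upwards [self_mem_nhdsWithin] with ξ hξ
      refine .of_forall fun s => ?_
      rw [norm_indicator_eq_indicator_norm]
      refine indicator_apply_le' (fun hs => ?_) (fun _ => by positivity)
      rw [norm_mul]
      gcongr
      exact norm_inv_pow_mul_chainKernelIntegral_le hint hξ m
        (sub_nonneg.2 ((le_div_iff₀' hξ).1 hs.2))
    · exact (IntegrableOn.mono_set (hint m).norm Ioi_subset_Ici_self).mul_const _

theorem tendsto_inv_pow_mul_intervalIntegral_chainKernelIntegral
    (hm : ∀ j, StronglyMeasurable (h j)) (hint : ∀ j, IntegrableOn (h j) (Ici 0)) (m : ℕ)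
    {t : ℝ} (ht : 0 ≤ t) :
    Tendsto (fun ξ : ℝ => ((ξ : ℂ) ^ m)⁻¹ * ∫ t₁ in 0..t, chainKernelIntegral h ξ m t₁)
      (𝓝[>] 0) (𝓝 (t * ∏ j ∈ Finset.range m, ∫ s in Ioi 0, h j s)) := by
  simp_rw [← intervalIntegral.integral_const_mul]
  have hdom := intervalIntegral.tendsto_integral_filter_of_dominated_convergence
    (μ := volume) (a := 0) (b := t)
    (F := fun (ξ : ℝ) t₁ => ((ξ : ℂ) ^ m)⁻¹ * chainKernelIntegral h ξ m t₁)
    (f := fun _ => ∏ j ∈ Finset.range m, ∫ s in Ioi 0, h j s)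
    (l := 𝓝[>] 0) (fun _ => ∏ j ∈ Finset.range m, ∫ v in Ioi 0, ‖h j v‖)
    (.of_forall fun ξ => (stronglyMeasurable_const.mul
      (stronglyMeasurable_chainKernelIntegral hm ξ m)).aestronglyMeasurable)
    ?_ intervalIntegrable_const ?_
  · simpa [mul_comm] using hdom
  · filter_upwards [self_mem_nhdsWithin] with ξ hξ
    refine .of_forall fun t₁ ht₁ => norm_inv_pow_mul_chainKernelIntegral_le hint hξ m ?_
    rw [uIoc_of_le ht] at ht₁
    exact ht₁.1.le
  · refine .of_forall fun t₁ ht₁ => ?_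
    rw [uIoc_of_le ht] at ht₁
    exact tendsto_inv_pow_mul_chainKernelIntegral hm hint m ht₁.1 tendsto_const_nhds

theorem exists_stronglyMeasurable_integrable_ae_eq {ι α E : Type*} [MeasurableSpace α]
    [NormedAddCommGroup E] {μ : Measure α} {p : ι → Prop} {f : ι → α → E}
    (hf : ∀ j, p j → Integrable (f j) μ) :
    ∃ g : ι → α → E, (∀ j, StronglyMeasurable (g j)) ∧ (∀ j, Integrable (g j) μ) ∧
      ∀ j, p j → f j =ᵐ[μ] g j := by
  classical
  refine ⟨fun j => if hj : p j then (hf j hj).1.mk _ else 0, fun j => ?_, fun j => ?_,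
    fun j hj => ?_⟩
  · dsimp only
    split_ifs with hj
    exacts [(hf j hj).1.stronglyMeasurable_mk, stronglyMeasurable_const]
  · dsimp only
    split_ifs with hj
    exacts [(hf j hj).congr (hf j hj).1.ae_eq_mk, integrable_zero _ _ _]
  · simpa only [dif_pos hj] using (hf j hj).1.ae_eq_mk

theorem lowDensity_connected_diagram_limit_general
    (n : ℕ)
    (h : ℕ → ℝ → ℂ) (hh : ∀ j < n - 1, IntegrableOn (h j) (Set.Ici (0 : ℝ)))
    (t : ℝ) (ht : 0 < t) :
    Tendsto
      (fun ξ : ℝ => (1 / ξ ^ (n - 1) : ℂ) *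
        ∫ t₁ in (0 : ℝ)..t, chainKernelIntegral h ξ (n - 1) t₁)
      (𝓝[>] 0)
      (𝓝 ((t : ℂ) * ∏ j ∈ Finset.range (n - 1), ∫ s in Set.Ioi (0 : ℝ), h j s)) := by
  obtain ⟨g, hgm, hgi, hhg⟩ :=
    exists_stronglyMeasurable_integrable_ae_eq (μ := volume.restrict (Ici 0)) hh
  have hprod : ∏ j ∈ Finset.range (n - 1), ∫ s in Ioi 0, h j s =
      ∏ j ∈ Finset.range (n - 1), ∫ s in Ioi 0, g j s :=
    Finset.prod_congr rfl fun j hj => integral_congr_ae <|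
      ae_restrict_of_ae_restrict_of_subset Ioi_subset_Ici_self (hhg j (Finset.mem_range.1 hj))
  rw [hprod]
  refine (tendsto_inv_pow_mul_intervalIntegral_chainKernelIntegral hgm hgi (n - 1) ht.le).congr'
    (eventually_nhdsWithin_of_forall fun ξ hξ => ?_)
  dsimp only
  rw [one_div]
  congr 1
  refine integral_congr fun t₁ ht₁ => (chainKernelIntegral_congr_ae hξ hhg ?_).symm
  rw [uIcc_of_le ht.le] at ht₁
  exact ht₁.1

/-- Contribution of the connected diagram in the low density limit: for `n ≥ 2`,
kernels `h_0, …, h_{n−2}` integrable on `[0,∞)` and `t > 0`,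
`ξ^{−(n−1)} ∫_0^t dt₁ ∫_0^{t₁} dt₂ ⋯ ∫_0^{t_{n−1}} dt_n Π_j h_j((t_j − t_{j+1})/ξ)`
converges as `ξ → 0⁺` to `t ⋅ Π_j ∫_0^∞ h_j(s) ds`. -/
theorem lowDensity_connected_diagram_limit
    (n : ℕ) (hn : 2 ≤ n)
    (h : ℕ → ℝ → ℂ) (hh : ∀ j < n - 1, IntegrableOn (h j) (Set.Ici (0 : ℝ)))
    (t : ℝ) (ht : 0 < t) :
    Tendsto
      (fun ξ : ℝ => (1 / ξ ^ (n - 1) : ℂ) *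
        ∫ t₁ in (0 : ℝ)..t, chainKernelIntegral h ξ (n - 1) t₁)
      (𝓝[>] 0)
      (𝓝 ((t : ℂ) * ∏ j ∈ Finset.range (n - 1), ∫ s in Set.Ioi (0 : ℝ), h j s)) :=
  lowDensity_connected_diagram_limit_general n h hh t ht
end

section
/- Let n ≥ 1, let J be a subset of {1,…,n−1}, let h_j (j ∈ J) be integrable complex-valued functions on [0,∞), and let t > 0. Set k = n − |J|. Then lim_{ξ→0⁺} ξ^{−|J|} ∫_0^t dt_1 ∫_0^{t_1} dt_2 … ∫_0^{t_{n−1}} dt_n Π_{j∈J} h_j((t_j − t_{j+1})/ξ) = (t^k / k!) · Π_{j∈J} ∫_0^∞ h_j(s) ds. -/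
open MeasureTheory Filter intervalIntegral
open scoped Topology

/-!
Write `F_m(ξ, s)` for the `m`-fold iterated integral, `c_m` for the number of kernels among the
first `m` steps and `G_m = ξ^{-c_m} F_m`. A trivial step gives `G_{m+1}(ξ, s) = ∫_0^s G_m(ξ, u) du`;
a kernel step becomes, after the substitution `u = s - ξ v`,
`G_{m+1}(ξ, s) = ∫_0^{s/ξ} h_m(v) G_m(ξ, s - ξ v) dv`. Since `G_m` is bounded uniformly in `ξ` and
locally uniformly in `s`, dominated convergence shows that the limit `L_m(s)` of `G_m(ξ, s)` as
`ξ → 0⁺` satisfies `L_{m+1} = ∫_0^s L_m` or `L_{m+1} = (∫_0^∞ h_m) L_m`, whence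
`L_m(s) = s^{k_m} / k_m! ⋅ ∏ ∫_0^∞ h_j` with `k_m = m - c_m`. Because the kernel step samples
`G_m` at the moving point `s - ξ v`, the limit has to be taken jointly in `(ξ, s)`.
-/

open Set

section MovingEndpoint

variable {α : Type*} {l : Filter α} {F : α → ℝ → ℂ} {f : ℝ → ℂ} {b : α → ℝ}

theorem setIntegral_Ioc_eq_setIntegral_Ioi_indicator (g : ℝ → ℂ) (c : ℝ) :
    ∫ v in Ioc 0 c, g v = ∫ v in Ioi 0, (Ioc 0 c).indicator g v := by
  rw [setIntegral_indicator measurableSet_Ioc, inter_eq_right.2 Ioc_subset_Ioi_self]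

theorem tendsto_setIntegral_Ioc_of_dominated [l.IsCountablyGenerated] (bound : ℝ → ℝ)
    (hmeas : ∀ᶠ x in l, AEStronglyMeasurable (F x) (volume.restrict (Ioc 0 (b x))))
    (hle : ∀ᶠ x in l, ∀ v ∈ Ioc 0 (b x), ‖F x v‖ ≤ bound v) (hbound : 0 ≤ bound)
    (hint : IntegrableOn bound (Ioi 0))
    (hlim : ∀ᵐ v ∂volume.restrict (Ioi 0),
      Tendsto (fun x => (Ioc 0 (b x)).indicator (F x) v) l (𝓝 (f v))) :
    Tendsto (fun x => ∫ v in Ioc 0 (b x), F x v) l (𝓝 (∫ v in Ioi 0, f v)) := by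
  simp only [setIntegral_Ioc_eq_setIntegral_Ioi_indicator]
  refine tendsto_integral_filter_of_dominated_convergence bound ?_ ?_ hint hlim
  · filter_upwards [hmeas] with x hx
    rw [aestronglyMeasurable_indicator_iff measurableSet_Ioc,
      Measure.restrict_restrict measurableSet_Ioc, inter_eq_left.2 Ioc_subset_Ioi_self]
    exact hx
  · filter_upwards [hle] with x hx
    refine ae_of_all _ fun v => ?_
    by_cases hv : v ∈ Ioc 0 (b x)
    · simpa [indicator_of_mem hv] using hx v hv
    · simpa [indicator_of_notMem hv] using hbound v

theorem tendsto_indicator_Ioc {b₀ v : ℝ} (hb : Tendsto b l (𝓝 b₀)) (hv : v ≠ b₀)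
    (hF : v < b₀ → Tendsto (fun x => F x v) l (𝓝 (f v))) :
    Tendsto (fun x => (Ioc 0 (b x)).indicator (F x) v) l (𝓝 ((Ioc 0 b₀).indicator f v)) := by
  rcases hv.lt_or_gt with hlt | hgt
  · by_cases hv0 : 0 < v
    · rw [indicator_of_mem (show v ∈ Ioc 0 b₀ from ⟨hv0, hlt.le⟩)]
      refine (hF hlt).congr' ?_
      filter_upwards [hb.eventually (eventually_gt_nhds hlt)] with x hx
      rw [indicator_of_mem (show v ∈ Ioc 0 (b x) from ⟨hv0, hx.le⟩)]
    · simp only [indicator_of_notMem (fun h : v ∈ Ioc 0 _ => hv0 h.1), tendsto_const_nhds]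
  · rw [indicator_of_notMem fun h => (h.2.trans_lt hgt).false]
    refine tendsto_const_nhds.congr' ?_
    filter_upwards [hb.eventually (eventually_lt_nhds hgt)] with x hx
    rw [indicator_of_notMem fun h => (h.2.trans_lt hx).false]

theorem tendsto_setIntegral_Ioc_of_tendsto_endpoint [l.IsCountablyGenerated] {b₀ : ℝ}
    (bound : ℝ → ℝ) (hb : Tendsto b l (𝓝 b₀))
    (hmeas : ∀ᶠ x in l, AEStronglyMeasurable (F x) (volume.restrict (Ioc 0 (b x))))
    (hle : ∀ᶠ x in l, ∀ v ∈ Ioc 0 (b x), ‖F x v‖ ≤ bound v) (hbound : 0 ≤ bound)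
    (hint : IntegrableOn bound (Ioi 0))
    (hlim : ∀ v ∈ Ioo 0 b₀, Tendsto (fun x => F x v) l (𝓝 (f v))) :
    Tendsto (fun x => ∫ v in Ioc 0 (b x), F x v) l (𝓝 (∫ v in Ioc 0 b₀, f v)) := by
  rw [setIntegral_Ioc_eq_setIntegral_Ioi_indicator]
  refine tendsto_setIntegral_Ioc_of_dominated bound hmeas hle hbound hint ?_
  filter_upwards [ae_restrict_mem measurableSet_Ioi,
    ae_restrict_of_ae ((countable_singleton b₀).ae_notMem volume)] with v hv hne
  exact tendsto_indicator_Ioc hb hne fun hlt => hlim v ⟨hv, hlt⟩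

end MovingEndpoint

structure HasScaleLimit (F : ℝ → ℝ → ℂ) (L : ℝ → ℂ) : Prop where
  continuousOn : ∀ ξ > 0, ContinuousOn (F ξ) (Ici 0)
  bounded : ∀ T, ∃ C, ∀ ξ > 0, ∀ s ∈ Icc 0 T, ‖F ξ s‖ ≤ C
  tendsto : ∀ s > 0, Tendsto (fun p : ℝ × ℝ => F p.1 p.2) (𝓝[>] 0 ×ˢ 𝓝 s) (𝓝 (L s))

section KernelConvolution

variable {g : ℝ → ℂ} {ξ : ℝ}

noncomputable def kernelConv (g : ℝ → ℂ) (ξ : ℝ) (F : ℝ → ℂ) (s : ℝ) : ℂ :=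
  (ξ : ℂ)⁻¹ * ∫ u in 0..s, g ((s - u) / ξ) * F u

theorem sub_mul_nonneg_of_le_div {s v : ℝ} (hξ : 0 < ξ) (hv : v ≤ s / ξ) : 0 ≤ s - ξ * v := by
  rw [le_div_iff₀' hξ] at hv
  linarith

theorem kernelConv_eq_setIntegral (F : ℝ → ℂ) (hξ : 0 < ξ) {s : ℝ} (hs : 0 ≤ s) :
    kernelConv g ξ F s = ∫ v in Ioc 0 (s / ξ), g v * F (s - ξ * v) := by
  have hsubst :=
    smul_integral_comp_sub_mul (fun u => g ((s - u) / ξ) * F u) (a := 0) (b := s / ξ) ξ s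
  rw [mul_div_cancel₀ s hξ.ne', sub_self, mul_zero, sub_zero] at hsubst
  rw [kernelConv, ← hsubst, ← integral_of_le (div_nonneg hs hξ.le), Complex.real_smul, ← mul_assoc,
    inv_mul_cancel₀ (Complex.ofReal_ne_zero.2 hξ.ne'), one_mul]
  congr 1 with v
  rw [sub_sub_cancel, mul_div_cancel_left₀ v hξ.ne']

theorem aestronglyMeasurable_kernel_integrand (hg : IntegrableOn g (Ici 0)) {F : ℝ → ℂ}
    (hF : ContinuousOn F (Ici 0)) (hξ : 0 < ξ) (s : ℝ) :
    AEStronglyMeasurable (fun v => g v * F (s - ξ * v)) (volume.restrict (Ioc 0 (s / ξ))) := by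
  refine (hg.1.mono_set fun v hv => mem_Ici.2 hv.1.le).mul ?_
  refine ContinuousOn.aestronglyMeasurable ?_ measurableSet_Ioc
  exact hF.comp (by fun_prop) fun v hv => sub_mul_nonneg_of_le_div hξ hv.2

theorem norm_kernel_integrand_le {F : ℝ → ℂ} {T C s v : ℝ} (hC : ∀ u ∈ Icc 0 T, ‖F u‖ ≤ C)
    (hξ : 0 < ξ) (hsT : s ≤ T) (hv : v ∈ Ioc 0 (s / ξ)) :
    ‖g v * F (s - ξ * v)‖ ≤ ‖g v‖ * C := by
  rw [norm_mul]
  refine mul_le_mul_of_nonneg_left (hC _ ⟨sub_mul_nonneg_of_le_div hξ hv.2, ?_⟩) (norm_nonneg _)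
  nlinarith [hv.1]

theorem continuousOn_kernelConv (hg : IntegrableOn g (Ici 0)) {F : ℝ → ℂ}
    (hF : ContinuousOn F (Ici 0)) (hξ : 0 < ξ) :
    ContinuousOn (kernelConv g ξ F) (Ici 0) := by
  refine ContinuousOn.congr (f := fun s => ∫ v in Ioc 0 (s / ξ), g v * F (s - ξ * v)) ?_
    fun s hs => kernelConv_eq_setIntegral F hξ hs
  intro s₀ hs₀
  obtain ⟨C, hC⟩ := isCompact_Icc.exists_bound_of_continuousOn
    (hF.mono (show Icc 0 (s₀ + 1) ⊆ Ici 0 from Icc_subset_Ici_self))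
  have hC0 : 0 ≤ C := (norm_nonneg _).trans (hC 0 ⟨le_rfl, by linarith [mem_Ici.1 hs₀]⟩)
  refine tendsto_setIntegral_Ioc_of_tendsto_endpoint (fun v => ‖g v‖ * C)
    (((continuous_id.div_const ξ).tendsto s₀).mono_left nhdsWithin_le_nhds) ?_ ?_
    (fun v => mul_nonneg (norm_nonneg _) hC0)
    ((hg.mono_set Ioi_subset_Ici_self).norm.mul_const C) ?_
  · exact Eventually.of_forall fun s => aestronglyMeasurable_kernel_integrand hg hF hξ s
  · filter_upwards [mem_nhdsWithin_of_mem_nhds (Iic_mem_nhds (lt_add_one s₀))] with s hs v hv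
    exact norm_kernel_integrand_le hC hξ hs hv
  · intro v hv
    have hpos : 0 < s₀ - ξ * v := by
      have := hv.2
      rw [lt_div_iff₀' hξ] at this
      linarith
    refine tendsto_const_nhds.mul ((hF.continuousAt (Ici_mem_nhds hpos)).tendsto.comp ?_)
    exact ((continuous_sub_right _).tendsto s₀).mono_left nhdsWithin_le_nhds

theorem norm_kernelConv_le (hg : IntegrableOn g (Ici 0)) {F : ℝ → ℂ} {T C : ℝ}
    (hC : ∀ u ∈ Icc 0 T, ‖F u‖ ≤ C) (hξ : 0 < ξ) {s : ℝ} (hs : s ∈ Icc 0 T) :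
    ‖kernelConv g ξ F s‖ ≤ (∫ v in Ioi 0, ‖g v‖) * C := by
  have hC0 : 0 ≤ C := (norm_nonneg _).trans (hC 0 ⟨le_rfl, hs.1.trans hs.2⟩)
  have hint : IntegrableOn (fun v => ‖g v‖ * C) (Ioi 0) :=
    (hg.mono_set Ioi_subset_Ici_self).norm.mul_const C
  rw [kernelConv_eq_setIntegral F hξ hs.1, ← MeasureTheory.integral_mul_const]
  calc ‖∫ v in Ioc 0 (s / ξ), g v * F (s - ξ * v)‖
      ≤ ∫ v in Ioc 0 (s / ξ), ‖g v‖ * C := by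
        refine norm_integral_le_of_norm_le (hint.mono_set Ioc_subset_Ioi_self) ?_
        filter_upwards [ae_restrict_mem measurableSet_Ioc] with v hv
        exact norm_kernel_integrand_le hC hξ hs.2 hv
    _ ≤ ∫ v in Ioi 0, ‖g v‖ * C :=
        setIntegral_mono_set hint (ae_of_all _ fun v => mul_nonneg (norm_nonneg _) hC0)
          (Eventually.of_forall Ioc_subset_Ioi_self)

theorem tendsto_kernelConv (hg : IntegrableOn g (Ici 0)) {F : ℝ → ℝ → ℂ} {L : ℝ → ℂ}
    (hF : HasScaleLimit F L) {s₀ : ℝ} (hs₀ : 0 < s₀) :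
    Tendsto (fun p : ℝ × ℝ => kernelConv g p.1 (F p.1) p.2) (𝓝[>] 0 ×ˢ 𝓝 s₀)
      (𝓝 ((∫ v in Ioi 0, g v) * L s₀)) := by
  obtain ⟨C, hC⟩ := hF.bounded (s₀ + 1)
  have hC0 : 0 ≤ C := (norm_nonneg _).trans (hC 1 one_pos 0 ⟨le_rfl, by linarith⟩)
  have hξ : ∀ᶠ p : ℝ × ℝ in 𝓝[>] 0 ×ˢ 𝓝 s₀, 0 < p.1 := tendsto_fst.eventually self_mem_nhdsWithin
  have hs : ∀ᶠ p : ℝ × ℝ in 𝓝[>] 0 ×ˢ 𝓝 s₀, p.2 ∈ Ioo 0 (s₀ + 1) :=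
    tendsto_snd.eventually (Ioo_mem_nhds hs₀ (lt_add_one s₀))
  refine Tendsto.congr' (f₁ := fun p => ∫ v in Ioc 0 (p.2 / p.1), g v * F p.1 (p.2 - p.1 * v)) ?_ ?_
  · filter_upwards [hξ, hs] with p hp hps
    exact (kernelConv_eq_setIntegral _ hp hps.1.le).symm
  rw [← MeasureTheory.integral_mul_const]
  refine tendsto_setIntegral_Ioc_of_dominated (fun v => ‖g v‖ * C) ?_ ?_
    (fun v => mul_nonneg (norm_nonneg _) hC0)
    ((hg.mono_set Ioi_subset_Ici_self).norm.mul_const C) ?_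
  · filter_upwards [hξ] with p hp
    exact aestronglyMeasurable_kernel_integrand hg (hF.continuousOn p.1 hp) hp p.2
  · filter_upwards [hξ, hs] with p hp hps v hv
    exact norm_kernel_integrand_le (hC p.1 hp) hp hps.2.le hv
  · filter_upwards [ae_restrict_mem measurableSet_Ioi] with v hv
    have hlarge : ∀ᶠ p : ℝ × ℝ in 𝓝[>] 0 ×ˢ 𝓝 s₀, v ≤ p.2 / p.1 := by
      simpa only [div_eq_mul_inv, Function.comp_def] using (tendsto_snd.pos_mul_atTop hs₀
        (tendsto_inv_nhdsGT_zero.comp tendsto_fst)).eventually_ge_atTop v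
    have hshift : Tendsto (fun p : ℝ × ℝ => (p.1, p.2 - p.1 * v)) (𝓝[>] 0 ×ˢ 𝓝 s₀)
        (𝓝[>] 0 ×ˢ 𝓝 s₀) := by
      refine tendsto_fst.prodMk ?_
      have hξ₀ : Tendsto (fun p : ℝ × ℝ => p.1) (𝓝[>] 0 ×ˢ 𝓝 s₀) (𝓝 0) :=
        tendsto_fst.mono_right nhdsWithin_le_nhds
      simpa using tendsto_snd.sub (hξ₀.mul_const v)
    refine (tendsto_const_nhds.mul ((hF.tendsto s₀ hs₀).comp hshift)).congr' ?_
    filter_upwards [hlarge] with p hp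
    rw [indicator_of_mem (show v ∈ Ioc 0 (p.2 / p.1) from ⟨hv, hp⟩)]
    rfl

theorem HasScaleLimit.kernelConv (hg : IntegrableOn g (Ici 0)) {F : ℝ → ℝ → ℂ} {L : ℝ → ℂ}
    (hF : HasScaleLimit F L) :
    HasScaleLimit (fun ξ => kernelConv g ξ (F ξ)) (fun s => (∫ v in Ioi 0, g v) * L s) where
  continuousOn ξ hξ := continuousOn_kernelConv hg (hF.continuousOn ξ hξ) hξ
  bounded T := by
    obtain ⟨C, hC⟩ := hF.bounded T
    exact ⟨(∫ v in Ioi 0, ‖g v‖) * C, fun ξ hξ s hs => norm_kernelConv_le hg (hC ξ hξ) hξ hs⟩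
  tendsto _ hs := tendsto_kernelConv hg hF hs

end KernelConvolution

theorem continuousOn_primitive_Ici {f : ℝ → ℂ} (hf : ContinuousOn f (Ici 0)) :
    ContinuousOn (fun s => ∫ u in 0..s, f u) (Ici 0) := by
  intro s₀ hs₀
  have hT : (0 : ℝ) ≤ s₀ + 1 := by linarith [mem_Ici.1 hs₀]
  have hprim := continuousOn_primitive_interval (μ := volume) (a := 0) (b := s₀ + 1)
    (by rw [uIcc_of_le hT]; exact (hf.mono Icc_subset_Ici_self).integrableOn_Icc)
  rw [uIcc_of_le hT] at hprim
  refine (hprim s₀ ⟨hs₀, by linarith⟩).mono_of_mem_nhdsWithin ?_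
  rw [← Ici_inter_Iic]
  exact inter_mem_nhdsWithin _ (Iic_mem_nhds (lt_add_one s₀))

namespace HasScaleLimit

theorem one : HasScaleLimit (fun _ _ => 1) (fun _ => 1) where
  continuousOn _ _ := continuousOn_const
  bounded _ := ⟨1, fun _ _ _ _ => norm_one.le⟩
  tendsto _ _ := tendsto_const_nhds

theorem primitive {F : ℝ → ℝ → ℂ} {L : ℝ → ℂ} (hF : HasScaleLimit F L) :
    HasScaleLimit (fun ξ s => ∫ u in 0..s, F ξ u) (fun s => ∫ u in 0..s, L u) where
  continuousOn ξ hξ := continuousOn_primitive_Ici (hF.continuousOn ξ hξ)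
  bounded T := by
    obtain ⟨C, hC⟩ := hF.bounded T
    refine ⟨C * T, fun ξ hξ s hs => ?_⟩
    have hC0 : 0 ≤ C := (norm_nonneg _).trans (hC ξ hξ 0 ⟨le_rfl, hs.1.trans hs.2⟩)
    calc ‖∫ u in 0..s, F ξ u‖ ≤ C * |s - 0| := by
          refine norm_integral_le_of_norm_le_const fun u hu => hC ξ hξ u ?_
          rw [uIoc_of_le hs.1] at hu
          exact ⟨hu.1.le, hu.2.trans hs.2⟩
      _ ≤ C * T := by
          rw [sub_zero, abs_of_nonneg hs.1]
          exact mul_le_mul_of_nonneg_left hs.2 hC0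
  tendsto s₀ hs₀ := by
    obtain ⟨C, hC⟩ := hF.bounded (s₀ + 1)
    have hC0 : 0 ≤ C := (norm_nonneg _).trans (hC 1 one_pos 0 ⟨le_rfl, by linarith⟩)
    have hξ : ∀ᶠ p : ℝ × ℝ in 𝓝[>] 0 ×ˢ 𝓝 s₀, 0 < p.1 := tendsto_fst.eventually self_mem_nhdsWithin
    have hs : ∀ᶠ p : ℝ × ℝ in 𝓝[>] 0 ×ˢ 𝓝 s₀, p.2 ∈ Ioo 0 (s₀ + 1) :=
      tendsto_snd.eventually (Ioo_mem_nhds hs₀ (lt_add_one s₀))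
    refine Tendsto.congr' (f₁ := fun p => ∫ u in Ioc 0 p.2, F p.1 u) ?_ ?_
    · filter_upwards [hs] with p hp
      exact (integral_of_le hp.1.le).symm
    rw [integral_of_le hs₀.le]
    refine tendsto_setIntegral_Ioc_of_tendsto_endpoint ((Ioc 0 (s₀ + 1)).indicator fun _ => C)
      tendsto_snd ?_ ?_ (indicator_nonneg fun _ _ => hC0) ?_ ?_
    · filter_upwards [hξ] with p hp
      exact ((hF.continuousOn p.1 hp).mono fun u hu => mem_Ici.2 hu.1.le).aestronglyMeasurable
        measurableSet_Ioc
    · filter_upwards [hξ, hs] with p hp hps u hu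
      rw [indicator_of_mem (show u ∈ Ioc 0 (s₀ + 1) from ⟨hu.1, hu.2.trans hps.2.le⟩)]
      exact hC p.1 hp u ⟨hu.1.le, hu.2.trans hps.2.le⟩
    · exact ((integrable_indicator_iff measurableSet_Ioc).2
        (integrableOn_const measure_Ioc_lt_top.ne)).integrableOn
    · intro u hu
      exact (hF.tendsto u hu.1).comp (tendsto_fst.prodMk tendsto_const_nhds)

end HasScaleLimit

theorem integral_pow_div_factorial (k : ℕ) (s : ℝ) :
    ∫ u in 0..s, (u : ℂ) ^ k / k.factorial = (s : ℂ) ^ (k + 1) / (k + 1).factorial := by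
  have hreal (u : ℝ) : (u : ℂ) ^ k / k.factorial = ((u ^ k / k.factorial : ℝ) : ℂ) := by
    norm_cast
  simp only [hreal, intervalIntegral.integral_ofReal, intervalIntegral.integral_div, integral_pow,
    zero_pow k.succ_ne_zero, sub_zero, Nat.factorial_succ]
  push_cast
  field_simp

section Diagram

open Finset

variable {J : Finset ℕ} {h : ℕ → ℝ → ℂ} {m : ℕ}

noncomputable def diagramLimit (J : Finset ℕ) (h : ℕ → ℝ → ℂ) (m : ℕ) (s : ℝ) : ℂ :=
  (s : ℂ) ^ (m - #(J ∩ range m)) / (m - #(J ∩ range m)).factorial *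
    ∏ j ∈ J ∩ range m, ∫ v in Ioi 0, h j v

theorem diagramLimit_succ_of_mem (hm : m ∈ J) (s : ℝ) :
    diagramLimit J h (m + 1) s = (∫ v in Ioi 0, h m v) * diagramLimit J h m s := by
  have hnot : m ∉ J ∩ range m := by simp
  simp only [diagramLimit, range_add_one, Finset.inter_insert_of_mem hm, card_insert_of_notMem hnot,
    prod_insert hnot, Nat.add_sub_add_right]
  ring

theorem diagramLimit_succ_of_notMem (hm : m ∉ J) (s : ℝ) :
    diagramLimit J h (m + 1) s = ∫ u in 0..s, diagramLimit J h m u := by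
  have hk : m + 1 - #(J ∩ range m) = m - #(J ∩ range m) + 1 := by
    have := (Finset.card_le_card (inter_subset_right (s₁ := J))).trans (card_range m).le
    omega
  simp only [diagramLimit, range_add_one, Finset.inter_insert_of_notMem hm, hk,
    intervalIntegral.integral_mul_const, integral_pow_div_factorial]

theorem hasScaleLimit_chainKernelIntegral (hh : ∀ j ∈ J, IntegrableOn (h j) (Ici 0)) (m : ℕ) :
    HasScaleLimit
      (fun ξ s => ((ξ : ℂ) ^ #(J ∩ range m))⁻¹ *
        chainKernelIntegral (fun j => if j ∈ J then h j else fun _ => 1) ξ m s)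
      (diagramLimit J h m) := by
  induction m with
  | zero =>
    convert HasScaleLimit.one using 1
    · ext ξ s
      simp [chainKernelIntegral]
    · ext s
      simp [diagramLimit]
  | succ m ih =>
    by_cases hm : m ∈ J
    · have hnot : m ∉ J ∩ range m := by simp
      convert ih.kernelConv (hh m hm) using 1
      · ext ξ s
        simp only [kernelConv, chainKernelIntegral, if_pos hm, range_add_one,
          Finset.inter_insert_of_mem hm, card_insert_of_notMem hnot,
          ← intervalIntegral.integral_const_mul]
        congr 1 with u
        ring
      · exact funext (diagramLimit_succ_of_mem hm)
    · convert ih.primitive using 1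
      · ext ξ s
        simp only [chainKernelIntegral, if_neg hm, range_add_one, Finset.inter_insert_of_notMem hm,
          one_mul, ← intervalIntegral.integral_const_mul]
      · exact funext (diagramLimit_succ_of_notMem hm)

end Diagram

/-- Contribution of a partially connected diagram in the low density limit: in the
`n`-fold simplex integral with rescaled kernels `h_j((t_j − t_{j+1})/ξ)` inserted only
for `j` in a subset `J` of `{1,…,n−1}` (kernels for `j ∉ J` replaced by `1`), one has,
with `k = n − |J|`,
`ξ^{−|J|} ∫_0^t dt₁ ⋯ ∫_0^{t_{n−1}} dt_n Π_{j∈J} h_j((t_j − t_{j+1})/ξ)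
  → (t^k / k!) ⋅ Π_{j∈J} ∫_0^∞ h_j(s) ds` as `ξ → 0⁺`. -/
theorem lowDensity_partially_connected_diagram_limit
    (n : ℕ) (hn : 1 ≤ n)
    (J : Finset ℕ) (hJ : J ⊆ Finset.range (n - 1))
    (h : ℕ → ℝ → ℂ) (hh : ∀ j ∈ J, IntegrableOn (h j) (Set.Ici (0 : ℝ)))
    (t : ℝ) (ht : 0 < t) :
    Tendsto
      (fun ξ : ℝ => (1 / ξ ^ J.card : ℂ) *
        ∫ t₁ in (0 : ℝ)..t,
          chainKernelIntegral (fun j => if j ∈ J then h j else fun _ => 1) ξ (n - 1) t₁)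
      (𝓝[>] 0)
      (𝓝 (((t : ℂ) ^ (n - J.card) / (n - J.card).factorial) *
        ∏ j ∈ J, ∫ s in Set.Ioi (0 : ℝ), h j s)) := by
  obtain ⟨m, rfl⟩ := Nat.exists_eq_add_one.2 hn
  have hJm : J ∩ Finset.range (m + 1) = J :=
    Finset.inter_eq_left.2 (hJ.trans (Finset.range_subset_range.2 (by omega)))
  have hlast : m ∉ J := fun hm => by simpa using hJ hm
  have hlim := ((hasScaleLimit_chainKernelIntegral hh (m + 1)).tendsto t ht).comp
    (tendsto_id.prodMk (tendsto_const_nhds (x := t)))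
  convert hlim using 2 with ξ
  · simp [chainKernelIntegral, hJm, hlast]
  · simp [diagramLimit, hJm]
end

section
/- Let H be a complex Hilbert space, S : ℝ → B(H) a strongly continuous one-parameter unitary group, and L a bounded positive self-adjoint operator on H commuting with S_t for every t. For 0 < ξ < 1/‖L‖ set L_ξ = L(1 − ξL)^{−1} and M_ξ = (1 − ξL)^{−1}. Let f_1, g_1, f_2, g_2 ∈ H and define the time-ordered two-point correlation function of the rescaled number operators, C_ξ(t_1,t_2) = ⟨g_1, L_ξ f_1⟩⟨g_2, L_ξ f_2⟩ + (1/ξ) ⟨g_2, L_ξ S_{(t_1−t_2)/ξ} f_1⟩ ⟨g_1, M_ξ S_{(t_2−t_1)/ξ} f_2⟩. Assume that s ↦ ⟨g_2, L S_s f_1⟩⟨g_1, S_{−s} f_2⟩ is integrable on [0,∞) and that there exist ξ_0 > 0 and an integrable function h on [0,∞) with |⟨g_2, L_ξ S_s f_1⟩⟨g_1, M_ξ S_{−s} f_2⟩| ≤ h(s) for all 0 < ξ < ξ_0 and all s ≥ 0. Then for every continuous compactly supported φ : ℝ² → ℂ, lim_{ξ→0⁺} ∫_0^∞ dt_1 ∫_0^{t_1}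 dt_2 φ(t_1,t_2) C_ξ(t_1,t_2) = ∫_0^∞ dt_1 ∫_0^{t_1} dt_2 φ(t_1,t_2) ⟨g_1, L f_1⟩⟨g_2, L f_2⟩ + (∫_0^∞ φ(t,t) dt) · ∫_0^∞ ⟨g_2, L S_s f_1⟩⟨g_1, S_{−s} f_2⟩ ds. -/
open MeasureTheory Filter Set
open scoped Topology InnerProductSpace

/-!
After the substitution `t₂ = t₁ - ξ s`, the `1/ξ`-term of the correlator becomes the integral over
`(0, ∞)²` of `φ (t₁, t₁ - ξ s) B_ξ(s)` (cut off at `ξ s ≤ t₁`), where `B_ξ(s)` is the product of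
the two matrix elements. Since `(1 - ξL)⁻¹ → 1` in norm, `B_ξ → B₀` pointwise, and the assumed
integrable majorant `h` gives the bound `C 1_K(t₁) h(s)` with `K` the projection of `supp φ`.
Dominated convergence therefore yields `∫∫ φ(t, t) B₀(s) = (∫ φ(t, t)) (∫ B₀)`, while the
constant term converges trivially.
-/

theorem tendsto_ringInverse_one_sub_smul {R : Type*} [NormedRing R] [NormedAlgebra ℂ R]
    [CompleteSpace R] (a : R) :
    Tendsto (fun ξ : ℝ => Ring.inverse (1 - (ξ : ℂ) • a)) (𝓝 0) (𝓝 1) := by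
  have hcont : Continuous fun ξ : ℝ => 1 - (ξ : ℂ) • a := by fun_prop
  have hlin : Tendsto (fun ξ : ℝ => 1 - (ξ : ℂ) • a) (𝓝 0) (𝓝 1) := by
    simpa using hcont.tendsto 0
  simpa [Function.comp_def] using (NormedRing.inverse_continuousAt (1 : Rˣ)).tendsto.comp hlin

theorem tendsto_inner_apply {H : Type*} [NormedAddCommGroup H] [InnerProductSpace ℂ H]
    {α : Type*} {l : Filter α} {T : α → H →L[ℂ] H} {T₀ : H →L[ℂ] H} (hT : Tendsto T l (𝓝 T₀))
    (g x : H) : Tendsto (fun a => ⟪g, T a x⟫_ℂ) l (𝓝 ⟪g, T₀ x⟫_ℂ) :=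
  tendsto_const_nhds.inner (((ContinuousLinearMap.apply ℂ H x).continuous.tendsto T₀).comp hT)

theorem integral_mul_one_div_mul_comp_sub_div {ξ : ℝ} (hξ : 0 < ξ) (t : ℝ) (F G : ℝ → ℂ) :
    ∫ u in (0 : ℝ)..t, F u * ((1 / ξ : ℂ) * G ((t - u) / ξ)) =
      ∫ s in (0 : ℝ)..t / ξ, F (t - ξ * s) * G s := by
  have hsub : ∀ u, F u * ((1 / ξ : ℂ) * G ((t - u) / ξ)) =
      (1 / ξ : ℂ) * ((fun s => F (t - ξ * s) * G s) (t / ξ - u / ξ)) := by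
    intro u
    simp only [← sub_div, mul_div_cancel₀ _ hξ.ne', sub_sub_cancel]
    ring
  rw [intervalIntegral.integral_congr fun u _ => hsub u, intervalIntegral.integral_const_mul,
    intervalIntegral.integral_comp_sub_div (fun s => F (t - ξ * s) * G s) hξ.ne', sub_self,
    zero_div, sub_zero, Complex.real_smul, ← mul_assoc, one_div,
    inv_mul_cancel₀ (by exact_mod_cast hξ.ne'), one_mul]

theorem setIntegral_intervalIntegral_add {E : Type*} [NormedAddCommGroup E] [NormedSpace ℝ E]
    {s : Set ℝ} {F G : ℝ → ℝ → E}
    (hF : ∀ t, IntervalIntegrable (F t) volume 0 t) (hG : ∀ t, IntervalIntegrable (G t) volume 0 t)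
    (hF' : IntegrableOn (fun t => ∫ u in (0 : ℝ)..t, F t u) s)
    (hG' : IntegrableOn (fun t => ∫ u in (0 : ℝ)..t, G t u) s) :
    ∫ t in s, ∫ u in (0 : ℝ)..t, (F t u + G t u) =
      (∫ t in s, ∫ u in (0 : ℝ)..t, F t u) + ∫ t in s, ∫ u in (0 : ℝ)..t, G t u := by
  rw [← integral_add hF' hG']
  congr 1 with t
  exact intervalIntegral.integral_add (hF t) (hG t)

theorem apply_eq_zero_of_notMem_image_fst_tsupport {α β E : Type*} [TopologicalSpace α]
    [TopologicalSpace β] [Zero E] {φ : α × β → E} {t : α} (ht : t ∉ Prod.fst '' tsupport φ)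
    (u : β) : φ (t, u) = 0 :=
  image_eq_zero_of_notMem_tsupport fun hmem => ht ⟨(t, u), hmem, rfl⟩

theorem integrable_intervalIntegral_snd {E : Type*} [NormedAddCommGroup E] [NormedSpace ℝ E]
    {φ : ℝ × ℝ → E} (hφ : Continuous φ) (hφc : HasCompactSupport φ) :
    Integrable fun t => ∫ u in (0 : ℝ)..t, φ (t, u) := by
  have hcont : Continuous fun t => ∫ u in (0 : ℝ)..t, φ (t, u) :=
    intervalIntegral.continuous_parametric_intervalIntegral_of_continuous (f := fun t u => φ (t, u))
      hφ continuous_id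
  refine hcont.integrable_of_hasCompactSupport <|
    HasCompactSupport.intro (hφc.isCompact.image continuous_fst) fun t ht => ?_
  simp [apply_eq_zero_of_notMem_image_fst_tsupport ht]

section DiagonalRescaling

variable {φ : ℝ × ℝ → ℂ}

local notation "μ₊" => Measure.prod (volume.restrict (Ioi (0 : ℝ))) (volume.restrict (Ioi (0 : ℝ)))

/-- The integrand of the `1/ξ`-term after the substitution `t₂ = t₁ - ξ s`. -/
noncomputable def diagonalRescaling (φ : ℝ × ℝ → ℂ) (G : ℝ → ℂ) (ξ : ℝ) : ℝ × ℝ → ℂ :=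
  {q : ℝ × ℝ | 0 < q.2 ∧ ξ * q.2 ≤ q.1}.indicator fun q => φ (q.1, q.1 - ξ * q.2) * G q.2

theorem intervalIntegral_eq_integral_diagonalRescaling {ξ t : ℝ} (hξ : 0 < ξ) (ht : 0 ≤ t)
    (G : ℝ → ℂ) :
    ∫ u in (0 : ℝ)..t, φ (t, u) * ((1 / ξ : ℂ) * G ((t - u) / ξ)) =
      ∫ s in Ioi 0, diagonalRescaling φ G ξ (t, s) := by
  have hslice : (fun s => diagonalRescaling φ G ξ (t, s)) =
      (Ioc 0 (t / ξ)).indicator fun s => φ (t, t - ξ * s) * G s := by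
    ext s
    simp only [diagonalRescaling, indicator_apply, mem_ofPred_eq, mem_Ioc, le_div_iff₀ hξ,
      mul_comm ξ]
  rw [integral_mul_one_div_mul_comp_sub_div hξ, hslice, setIntegral_indicator measurableSet_Ioc,
    inter_eq_self_of_subset_right Ioc_subset_Ioi_self,
    intervalIntegral.integral_of_le (div_nonneg ht hξ.le)]

theorem norm_apply_le_indicator_fst {C : ℝ} (hC : ∀ p, ‖φ p‖ ≤ C) (t u : ℝ) :
    ‖φ (t, u)‖ ≤ (Prod.fst '' tsupport φ).indicator (fun _ => C) t := by
  by_cases ht : t ∈ Prod.fst '' tsupport φ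
  · simpa [indicator_of_mem ht] using hC (t, u)
  · simp [indicator_of_notMem ht, apply_eq_zero_of_notMem_image_fst_tsupport ht]

theorem norm_diagonalRescaling_le {C : ℝ} (hC : ∀ p, ‖φ p‖ ≤ C) {G : ℝ → ℂ} {h : ℝ → ℝ}
    (hG : ∀ s, 0 ≤ s → ‖G s‖ ≤ h s) (ξ : ℝ) {p : ℝ × ℝ} (hp : 0 ≤ p.2) :
    ‖diagonalRescaling φ G ξ p‖ ≤ (Prod.fst '' tsupport φ).indicator (fun _ => C) p.1 * h p.2 :=
  calc ‖diagonalRescaling φ G ξ p‖ ≤ ‖φ (p.1, p.1 - ξ * p.2) * G p.2‖ :=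
        norm_indicator_le_norm_self _ _
    _ ≤ _ := by
      rw [norm_mul]
      exact mul_le_mul (norm_apply_le_indicator_fst hC _ _) (hG _ hp) (norm_nonneg _)
        ((norm_nonneg _).trans (norm_apply_le_indicator_fst hC p.1 0))

theorem ae_pos_prod_volume_Ioi : ∀ᵐ p ∂μ₊, 0 < p.1 ∧ 0 < p.2 := by
  rw [Measure.prod_restrict]
  filter_upwards [ae_restrict_mem (measurableSet_Ioi.prod measurableSet_Ioi)] with p hp
  exact hp

theorem integrable_indicator_fst_mul (hφc : HasCompactSupport φ) (C : ℝ) {h : ℝ → ℝ}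
    (hh : IntegrableOn h (Ioi 0)) :
    Integrable (fun p : ℝ × ℝ => (Prod.fst '' tsupport φ).indicator (fun _ => C) p.1 * h p.2) μ₊ :=
  have hK : IsCompact (Prod.fst '' tsupport φ) := hφc.isCompact.image continuous_fst
  ((integrableOn_const hK.measure_lt_top.ne).integrable_indicator hK.measurableSet).restrict
    |>.mul_prod hh

theorem aestronglyMeasurable_diagonalRescaling (hφ : Continuous φ) {G : ℝ → ℂ}
    (hG : Continuous G) (ξ : ℝ) : AEStronglyMeasurable (diagonalRescaling φ G ξ) μ₊ := by
  have hset : MeasurableSet {q : ℝ × ℝ | 0 < q.2 ∧ ξ * q.2 ≤ q.1} :=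
    (measurableSet_lt measurable_const measurable_snd).inter
      (measurableSet_le (measurable_snd.const_mul ξ) measurable_fst)
  have hcont : Continuous fun q : ℝ × ℝ => φ (q.1, q.1 - ξ * q.2) * G q.2 := by fun_prop
  exact (hcont.stronglyMeasurable.indicator hset).aestronglyMeasurable

theorem integrable_diagonalRescaling (hφ : Continuous φ) (hφc : HasCompactSupport φ)
    {G : ℝ → ℂ} (hG : Continuous G) {h : ℝ → ℝ} (hh : IntegrableOn h (Ioi 0))
    (hGh : ∀ s, 0 ≤ s → ‖G s‖ ≤ h s) (ξ : ℝ) : Integrable (diagonalRescaling φ G ξ) μ₊ := by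
  obtain ⟨C, hC⟩ := hφ.norm.bddAbove_range_of_hasCompactSupport hφc.norm
  refine (integrable_indicator_fst_mul hφc C hh).mono'
    (aestronglyMeasurable_diagonalRescaling hφ hG ξ) ?_
  filter_upwards [ae_pos_prod_volume_Ioi] with p hp
  exact norm_diagonalRescaling_le (fun p => hC ⟨p, rfl⟩) hGh ξ hp.2.le

theorem tendsto_diagonalRescaling_apply (hφ : Continuous φ) {B : ℝ → ℝ → ℂ} {B₀ : ℝ → ℂ}
    (hB : ∀ s, Tendsto (fun ξ => B ξ s) (𝓝[>] 0) (𝓝 (B₀ s))) {p : ℝ × ℝ} (hp : 0 < p.1 ∧ 0 < p.2) :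
    Tendsto (fun ξ => diagonalRescaling φ (B ξ) ξ p) (𝓝[>] 0) (𝓝 (φ (p.1, p.1) * B₀ p.2)) := by
  have hφξ : Tendsto (fun ξ : ℝ => φ (p.1, p.1 - ξ * p.2)) (𝓝[>] 0) (𝓝 (φ (p.1, p.1))) := by
    have : Continuous fun ξ : ℝ => φ (p.1, p.1 - ξ * p.2) := by fun_prop
    simpa using (this.tendsto 0).mono_left nhdsWithin_le_nhds
  refine (hφξ.mul (hB p.2)).congr' ?_
  filter_upwards [Ioo_mem_nhdsGT (div_pos hp.1 hp.2)] with ξ hξ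
  exact (indicator_of_mem (s := {q : ℝ × ℝ | 0 < q.2 ∧ ξ * q.2 ≤ q.1})
    ⟨hp.2, ((lt_div_iff₀ hp.2).mp hξ.2).le⟩ fun q => φ (q.1, q.1 - ξ * q.2) * B ξ q.2).symm

theorem tendsto_integral_diagonalRescaling (hφ : Continuous φ) (hφc : HasCompactSupport φ)
    {B : ℝ → ℝ → ℂ} {B₀ : ℝ → ℂ} {h : ℝ → ℝ} (hBc : ∀ ξ, Continuous (B ξ))
    (hB : ∀ s, Tendsto (fun ξ => B ξ s) (𝓝[>] 0) (𝓝 (B₀ s))) (hh : IntegrableOn h (Ioi 0))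
    (hBh : ∀ᶠ ξ in 𝓝[>] 0, ∀ s, 0 ≤ s → ‖B ξ s‖ ≤ h s) :
    Tendsto (fun ξ => ∫ p, diagonalRescaling φ (B ξ) ξ p ∂μ₊) (𝓝[>] 0)
      (𝓝 ((∫ t in Ioi 0, φ (t, t)) * ∫ s in Ioi 0, B₀ s)) := by
  obtain ⟨C, hC⟩ := hφ.norm.bddAbove_range_of_hasCompactSupport hφc.norm
  rw [← integral_prod_mul (fun t => φ (t, t)) B₀]
  refine tendsto_integral_filter_of_dominated_convergence _
    (.of_forall fun ξ => aestronglyMeasurable_diagonalRescaling hφ (hBc ξ) ξ) ?_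
    (integrable_indicator_fst_mul hφc C hh) ?_
  · filter_upwards [hBh] with ξ hξ
    filter_upwards [ae_pos_prod_volume_Ioi] with p hp
    exact norm_diagonalRescaling_le (fun p => hC ⟨p, rfl⟩) hξ ξ hp.2.le
  · filter_upwards [ae_pos_prod_volume_Ioi] with p hp
    exact tendsto_diagonalRescaling_apply hφ hB hp

theorem integrableOn_intervalIntegral_of_integrable_diagonalRescaling {G : ℝ → ℂ} {ξ : ℝ}
    (hξ : 0 < ξ) (hK : Integrable (diagonalRescaling φ G ξ) μ₊) :
    IntegrableOn (fun t => ∫ u in (0 : ℝ)..t, φ (t, u) * ((1 / ξ : ℂ) * G ((t - u) / ξ)))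
      (Ioi 0) := by
  refine hK.integral_prod_left.congr ?_
  filter_upwards [ae_restrict_mem measurableSet_Ioi] with t ht
  exact (intervalIntegral_eq_integral_diagonalRescaling hξ (le_of_lt ht) G).symm

theorem setIntegral_intervalIntegral_eq_integral_diagonalRescaling {G : ℝ → ℂ} {ξ : ℝ}
    (hξ : 0 < ξ) (hK : Integrable (diagonalRescaling φ G ξ) μ₊) :
    ∫ t in Ioi 0, ∫ u in (0 : ℝ)..t, φ (t, u) * ((1 / ξ : ℂ) * G ((t - u) / ξ)) =
      ∫ p, diagonalRescaling φ G ξ p ∂μ₊ := by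
  rw [integral_prod _ hK]
  exact setIntegral_congr_fun measurableSet_Ioi fun t ht =>
    intervalIntegral_eq_integral_diagonalRescaling hξ (le_of_lt ht) G

theorem tendsto_timeOrdered_integral (hφ : Continuous φ) (hφc : HasCompactSupport φ)
    {A : ℝ → ℂ} {A₀ : ℂ} (hA : Tendsto A (𝓝[>] 0) (𝓝 A₀))
    {B : ℝ → ℝ → ℂ} {B₀ : ℝ → ℂ} {h : ℝ → ℝ} (hBc : ∀ ξ, Continuous (B ξ))
    (hB : ∀ s, Tendsto (fun ξ => B ξ s) (𝓝[>] 0) (𝓝 (B₀ s))) (hh : IntegrableOn h (Ioi 0))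
    (hBh : ∀ᶠ ξ in 𝓝[>] 0, ∀ s, 0 ≤ s → ‖B ξ s‖ ≤ h s) :
    Tendsto (fun ξ => ∫ t₁ in Ioi 0, ∫ t₂ in (0 : ℝ)..t₁,
        φ (t₁, t₂) * (A ξ + (1 / ξ : ℂ) * B ξ ((t₁ - t₂) / ξ))) (𝓝[>] 0)
      (𝓝 ((∫ t₁ in Ioi 0, ∫ t₂ in (0 : ℝ)..t₁, φ (t₁, t₂) * A₀) +
        (∫ t in Ioi 0, φ (t, t)) * ∫ s in Ioi 0, B₀ s)) := by
  have hconst : Tendsto (fun ξ => ∫ t₁ in Ioi 0, ∫ t₂ in (0 : ℝ)..t₁, φ (t₁, t₂) * A ξ)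
      (𝓝[>] 0) (𝓝 (∫ t₁ in Ioi 0, ∫ t₂ in (0 : ℝ)..t₁, φ (t₁, t₂) * A₀)) := by
    simp only [intervalIntegral.integral_mul_const, integral_mul_const]
    exact hA.const_mul _
  refine (hconst.add (tendsto_integral_diagonalRescaling hφ hφc hBc hB hh hBh)).congr' ?_
  filter_upwards [self_mem_nhdsWithin, hBh] with ξ (hξ : 0 < ξ) hξh
  have hK := integrable_diagonalRescaling hφ hφc (hBc ξ) hh hξh ξ
  have hconstInt : IntegrableOn (fun t₁ => ∫ t₂ in (0 : ℝ)..t₁, φ (t₁, t₂) * A ξ) (Ioi 0) := by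
    simp only [intervalIntegral.integral_mul_const]
    exact ((integrable_intervalIntegral_snd hφ hφc).mul_const _).integrableOn
  have hBξ := hBc ξ
  simp only [mul_add]
  rw [setIntegral_intervalIntegral_add (F := fun t₁ t₂ => φ (t₁, t₂) * A ξ)
      (G := fun t₁ t₂ => φ (t₁, t₂) * ((1 / ξ : ℂ) * B ξ ((t₁ - t₂) / ξ)))
      (fun t => Continuous.intervalIntegrable (by fun_prop) 0 t)
      (fun t => Continuous.intervalIntegrable (by fun_prop) 0 t)
      hconstInt (integrableOn_intervalIntegral_of_integrable_diagonalRescaling hξ hK),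
    setIntegral_intervalIntegral_eq_integral_diagonalRescaling hξ hK]

end DiagonalRescaling

theorem lowDensity_two_point_correlator_convergence_general
    {H : Type*} [NormedAddCommGroup H] [InnerProductSpace ℂ H] [CompleteSpace H]
    (S : ℝ → (H →L[ℂ] H))
    (hScont : ∀ x : H, Continuous fun t : ℝ => S t x)
    (L : H →L[ℂ] H)
    (f₁ g₁ f₂ g₂ : H)
    (hdom : ∃ ξ₀ > (0 : ℝ), ∃ hmaj : ℝ → ℝ, IntegrableOn hmaj (Set.Ici (0 : ℝ)) ∧
      ∀ ξ : ℝ, 0 < ξ → ξ < ξ₀ → ∀ s : ℝ, 0 ≤ s →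
        ‖⟪g₂, (L * Ring.inverse (1 - (ξ : ℂ) • L)) (S s f₁)⟫_ℂ *
            ⟪g₁, (Ring.inverse (1 - (ξ : ℂ) • L)) (S (-s) f₂)⟫_ℂ‖ ≤ hmaj s)
    (φ : ℝ × ℝ → ℂ) (hφ : Continuous φ) (hφc : HasCompactSupport φ) :
    Tendsto
      (fun ξ : ℝ =>
        ∫ t₁ in Set.Ioi (0 : ℝ), ∫ t₂ in (0 : ℝ)..t₁, φ (t₁, t₂) *
          (⟪g₁, (L * Ring.inverse (1 - (ξ : ℂ) • L)) f₁⟫_ℂ *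
              ⟪g₂, (L * Ring.inverse (1 - (ξ : ℂ) • L)) f₂⟫_ℂ +
            (1 / ξ : ℂ) *
              (⟪g₂, (L * Ring.inverse (1 - (ξ : ℂ) • L)) (S ((t₁ - t₂) / ξ) f₁)⟫_ℂ *
                ⟪g₁, (Ring.inverse (1 - (ξ : ℂ) • L)) (S ((t₂ - t₁) / ξ) f₂)⟫_ℂ)))
      (𝓝[>] 0)
      (𝓝 ((∫ t₁ in Set.Ioi (0 : ℝ), ∫ t₂ in (0 : ℝ)..t₁, φ (t₁, t₂) *
              (⟪g₁, L f₁⟫_ℂ * ⟪g₂, L f₂⟫_ℂ)) +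
          (∫ t in Set.Ioi (0 : ℝ), φ (t, t)) *
            ∫ s in Set.Ioi (0 : ℝ), ⟪g₂, L (S s f₁)⟫_ℂ * ⟪g₁, S (-s) f₂⟫_ℂ)) := by
  obtain ⟨ξ₀, hξ₀, h, hh, hBh⟩ := hdom
  set R : ℝ → H →L[ℂ] H := fun ξ => Ring.inverse (1 - (ξ : ℂ) • L)
  have hR : Tendsto R (𝓝[>] 0) (𝓝 1) :=
    (tendsto_ringInverse_one_sub_smul L).mono_left nhdsWithin_le_nhds
  have hLR : Tendsto (fun ξ => L * R ξ) (𝓝[>] 0) (𝓝 L) := by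
    simpa using tendsto_const_nhds.mul hR
  have hB : ∀ s, Tendsto (fun ξ => ⟪g₂, (L * R ξ) (S s f₁)⟫_ℂ * ⟪g₁, R ξ (S (-s) f₂)⟫_ℂ)
      (𝓝[>] 0) (𝓝 (⟪g₂, L (S s f₁)⟫_ℂ * ⟪g₁, S (-s) f₂⟫_ℂ)) := fun s => by
    simpa using (tendsto_inner_apply hLR g₂ (S s f₁)).mul (tendsto_inner_apply hR g₁ (S (-s) f₂))
  have hBh' : ∀ᶠ ξ in 𝓝[>] 0, ∀ s, 0 ≤ s →
      ‖⟪g₂, (L * R ξ) (S s f₁)⟫_ℂ * ⟪g₁, R ξ (S (-s) f₂)⟫_ℂ‖ ≤ h s := by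
    filter_upwards [Ioo_mem_nhdsGT hξ₀] with ξ hξ using hBh ξ hξ.1 hξ.2
  convert tendsto_timeOrdered_integral hφ hφc
    ((tendsto_inner_apply hLR g₁ f₁).mul (tendsto_inner_apply hLR g₂ f₂))
    (fun ξ => by fun_prop) hB (hh.mono_set Set.Ioi_subset_Ici_self) hBh' using 8
  -- the statement evaluates `S` at `(t₂ - t₁) / ξ` rather than at `-((t₁ - t₂) / ξ)`
  rw [← neg_div, neg_sub]

/-- Convergence of the time-ordered two-point correlation function of the rescaled
number operators in the low density limit (the `n = 2` case of the convergence of the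
time-ordered correlators to those of the limiting time-energy quantum white noise):
with `L_ξ = L(1 − ξL)⁻¹`, `M_ξ = (1 − ξL)⁻¹` and
`C_ξ(t₁,t₂) = ⟨g₁,L_ξ f₁⟩⟨g₂,L_ξ f₂⟩
  + ξ⁻¹ ⟨g₂, L_ξ S_{(t₁−t₂)/ξ} f₁⟩⟨g₁, M_ξ S_{(t₂−t₁)/ξ} f₂⟩`,
under the stated integrability and domination assumptions, for every continuous
compactly supported `φ`,
`∫_0^∞ dt₁ ∫_0^{t₁} dt₂ φ(t₁,t₂) C_ξ(t₁,t₂)` converges as `ξ → 0⁺` to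
`∫_0^∞ dt₁ ∫_0^{t₁} dt₂ φ(t₁,t₂) ⟨g₁,Lf₁⟩⟨g₂,Lf₂⟩
  + (∫_0^∞ φ(t,t) dt) ∫_0^∞ ⟨g₂, L S_s f₁⟩⟨g₁, S_{−s} f₂⟩ ds`. -/
theorem lowDensity_two_point_correlator_convergence
    {H : Type*} [NormedAddCommGroup H] [InnerProductSpace ℂ H] [CompleteSpace H]
    (S : ℝ → (H →L[ℂ] H))
    (hS0 : S 0 = 1)
    (hSadd : ∀ s t : ℝ, S (s + t) = S s * S t)
    (hSunitary : ∀ t : ℝ, S t ∈ unitary (H →L[ℂ] H))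
    (hScont : ∀ x : H, Continuous fun t : ℝ => S t x)
    (L : H →L[ℂ] H) (hL : L.IsPositive)
    (hLS : ∀ t : ℝ, L * S t = S t * L)
    (f₁ g₁ f₂ g₂ : H)
    (hint : IntegrableOn
      (fun s : ℝ => ⟪g₂, L (S s f₁)⟫_ℂ * ⟪g₁, S (-s) f₂⟫_ℂ) (Set.Ici (0 : ℝ)))
    (hdom : ∃ ξ₀ > (0 : ℝ), ∃ hmaj : ℝ → ℝ, IntegrableOn hmaj (Set.Ici (0 : ℝ)) ∧
      ∀ ξ : ℝ, 0 < ξ → ξ < ξ₀ → ∀ s : ℝ, 0 ≤ s →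
        ‖⟪g₂, (L * Ring.inverse (1 - (ξ : ℂ) • L)) (S s f₁)⟫_ℂ *
            ⟪g₁, (Ring.inverse (1 - (ξ : ℂ) • L)) (S (-s) f₂)⟫_ℂ‖ ≤ hmaj s)
    (φ : ℝ × ℝ → ℂ) (hφ : Continuous φ) (hφc : HasCompactSupport φ) :
    Tendsto
      (fun ξ : ℝ =>
        ∫ t₁ in Set.Ioi (0 : ℝ), ∫ t₂ in (0 : ℝ)..t₁, φ (t₁, t₂) *
          (⟪g₁, (L * Ring.inverse (1 - (ξ : ℂ) • L)) f₁⟫_ℂ *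
              ⟪g₂, (L * Ring.inverse (1 - (ξ : ℂ) • L)) f₂⟫_ℂ +
            (1 / ξ : ℂ) *
              (⟪g₂, (L * Ring.inverse (1 - (ξ : ℂ) • L)) (S ((t₁ - t₂) / ξ) f₁)⟫_ℂ *
                ⟪g₁, (Ring.inverse (1 - (ξ : ℂ) • L)) (S ((t₂ - t₁) / ξ) f₂)⟫_ℂ)))
      (𝓝[>] 0)
      (𝓝 ((∫ t₁ in Set.Ioi (0 : ℝ), ∫ t₂ in (0 : ℝ)..t₁, φ (t₁, t₂) *
              (⟪g₁, L f₁⟫_ℂ * ⟪g₂, L f₂⟫_ℂ)) +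
          (∫ t in Set.Ioi (0 : ℝ), φ (t, t)) *
            ∫ s in Set.Ioi (0 : ℝ), ⟪g₂, L (S s f₁)⟫_ℂ * ⟪g₁, S (-s) f₂⟫_ℂ)) :=
  lowDensity_two_point_correlator_convergence_general S hScont L f₁ g₁ f₂ g₂ hdom φ hφ hφc
end

section
/- Let H be a complex Hilbert space, D a bounded operator on H, and γ_{m,n} ∈ ℂ for m,n ∈ {0,1}. Define M_1 = 1 + γ_{0,1} D* − γ_{1,0} D + (γ_{0,0}γ_{1,1} − γ_{1,0}γ_{0,1}) D*D and M_0 = 1 + γ_{0,1} D* − γ_{1,0} D + (γ_{0,0}γ_{1,1} − γ_{1,0}γ_{0,1}) DD*, and assume M_0 and M_1 are invertible in B(H) with inverses T_0 and T_1. Define R_{0,0} = γ_{1,1} D T_1 D*, R_{0,1} = −D T_1 (1 + γ_{0,1} D*), R_{1,1} = γ_{0,0} D* T_0 D, R_{1,0} = D* T_0 (1 − γ_{1,0} D), and set G_{m,n} = γ_{m,n} + conj(γ_{n,m}). Then for all a, b ∈ {0,1} the unitarity relations hold: R_{a,b} + (R_{b,a})* = Σ_{k,l∈{0,1}} (R_{k,a})*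 G_{k,l} R_{l,b} and R_{a,b} + (R_{b,a})* = Σ_{k,l∈{0,1}} R_{a,k} G_{k,l} (R_{b,l})*. -/
lemma scattering_unitar_aux {A : Type*} [Ring A] [StarRing A] {n : Type*} [Fintype n] [DecidableEq n]
    (RM AM GM VM : Matrix n n A)
    (hA : star AM = -AM)
    (hR2 : RM = AM - RM * GM * AM)
    (hPV : (1 + AM * GM) * VM = 1) :
    RM + star RM = star RM * (GM + star GM) * RM ∧
    RM + star RM = RM * (GM + star GM) * star RM := by
  have hR2' : RM * GM * AM = AM - RM := by
    have h := hR2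
    rw [eq_sub_iff_add_eq] at h
    rw [eq_sub_iff_add_eq, add_comm]
    exact h
  have hL : (1 - RM * GM) * (1 + AM * GM) = 1 := by
    calc (1 - RM * GM) * (1 + AM * GM)
        = 1 + (AM - RM - RM * GM * AM) * GM := by noncomm_ring
      _ = 1 := by rw [hR2']; noncomm_ring
  have hVeq : VM = 1 - RM * GM := by
    calc VM = ((1 - RM * GM) * (1 + AM * GM)) * VM := by rw [hL, one_mul]
      _ = (1 - RM * GM) * ((1 + AM * GM) * VM) := by rw [mul_assoc]
      _ = 1 - RM * GM := by rw [hPV, mul_one]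
  have hVP : VM * (1 + AM * GM) = 1 := by rw [hVeq]; exact hL
  have hQr : (1 + GM * AM) * (1 - GM * VM * AM) = 1 := by
    calc (1 + GM * AM) * (1 - GM * VM * AM)
        = 1 + GM * AM - GM * ((1 + AM * GM) * VM) * AM := by noncomm_ring
      _ = 1 := by rw [hPV]; noncomm_ring
  have hRQ : RM * (1 + GM * AM) = AM := by
    calc RM * (1 + GM * AM) = RM + RM * GM * AM := by noncomm_ring
      _ = RM + (AM - RM) := by rw [hR2']
      _ = AM := by noncomm_ring
  have hRA : RM = AM * (1 - GM * VM * AM) := by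
    calc RM = RM * ((1 + GM * AM) * (1 - GM * VM * AM)) := by rw [hQr, mul_one]
      _ = (RM * (1 + GM * AM)) * (1 - GM * VM * AM) := by rw [← mul_assoc]
      _ = AM * (1 - GM * VM * AM) := by rw [hRQ]
  have hR1 : RM = AM - AM * GM * RM := by
    calc RM = AM * (1 - GM * VM * AM) := hRA
      _ = AM * ((1 + GM * AM) * (1 - GM * VM * AM))
            - AM * GM * (AM * (1 - GM * VM * AM)) := by noncomm_ring
      _ = AM * 1 - AM * GM * (AM * (1 - GM * VM * AM)) := by rw [hQr]
      _ = AM - AM * GM * RM := by rw [← hRA, mul_one]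
  have hR1' : AM * GM * RM = AM - RM := by
    have h := hR1
    rw [eq_sub_iff_add_eq] at h
    rw [eq_sub_iff_add_eq, add_comm]
    exact h
  have h3 : AM * star GM * star RM = AM + star RM := by
    have h := congrArg star hR2'
    rw [star_sub, star_mul, star_mul, hA] at h
    calc AM * star GM * star RM = -(-AM * (star GM * star RM)) := by noncomm_ring
      _ = -(-AM - star RM) := by rw [h]
      _ = AM + star RM := by noncomm_ring
  have h4 : star RM * star GM * AM = AM + star RM := by
    have h := congrArg star hR1'
    rw [star_sub, star_mul, star_mul, hA] at h
    calc star RM * star GM * AM = -(star RM * (star GM * -AM)) := by noncomm_ring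
      _ = -(-AM - star RM) := by rw [h]
      _ = AM + star RM := by noncomm_ring
  constructor
  · have key : star RM * star GM * RM = RM + star RM - star RM * GM * RM := by
      calc star RM * star GM * RM
          = star RM * star GM * (AM - AM * GM * RM) :=
            congrArg (fun X => star RM * star GM * X) hR1
        _ = (star RM * star GM * AM) - (star RM * star GM * AM) * GM * RM := by noncomm_ring
        _ = (AM + star RM) - (AM + star RM) * GM * RM := by rw [h4]
        _ = AM + star RM - AM * GM * RM - star RM * GM * RM := by noncomm_ring
        _ = AM + star RM - (AM - RM) - star RM * GM * RM := by rw [hR1']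
        _ = RM + star RM - star RM * GM * RM := by noncomm_ring
    calc RM + star RM
        = star RM * GM * RM + (RM + star RM - star RM * GM * RM) := by noncomm_ring
      _ = star RM * GM * RM + star RM * star GM * RM := by rw [key]
      _ = star RM * (GM + star GM) * RM := by noncomm_ring
  · have key : RM * star GM * star RM = RM + star RM - RM * GM * star RM := by
      calc RM * star GM * star RM
          = (AM - RM * GM * AM) * star GM * star RM :=
            congrArg (fun X => X * star GM * star RM) hR2
        _ = (AM * star GM * star RM) - RM * GM * (AM * star GM * star RM) := by noncomm_ring
        _ = (AM + star RM) - RM * GM * (AM + star RM) := by rw [h3]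
        _ = AM + star RM - RM * GM * AM - RM * GM * star RM := by noncomm_ring
        _ = AM + star RM - (AM - RM) - RM * GM * star RM := by rw [hR2']
        _ = RM + star RM - RM * GM * star RM := by noncomm_ring
    calc RM + star RM
        = RM * GM * star RM + (RM + star RM - RM * GM * star RM) := by noncomm_ring
      _ = RM * GM * star RM + RM * star GM * star RM := by rw [key]
      _ = RM * (GM + star GM) * star RM := by noncomm_ring



/-- Energy-by-energy unitarity relations for the operator coefficients `R_{m,n}(E)` of
the one-particle scattering operator in the low density limit: with
`γ_{m,n} = γ_{g_m,g_n}(E)`, `T₀ = M₀⁻¹`, `T₁ = M₁⁻¹`, the operators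
`R_{0,0} = γ_{1,1} D T₁ D*`, `R_{0,1} = −D T₁(1 + γ_{0,1} D*)`,
`R_{1,1} = γ_{0,0} D* T₀ D`, `R_{1,0} = D* T₀(1 − γ_{1,0} D)` and the Gram matrix
`G_{m,n} = γ_{m,n} + conj(γ_{n,m})` satisfy
`R_{a,b} + (R_{b,a})* = Σ_{k,l} (R_{k,a})* G_{k,l} R_{l,b}
                      = Σ_{k,l} R_{a,k} G_{k,l} (R_{b,l})*`. -/
theorem scattering_coefficients_unitarity
    {H : Type*} [NormedAddCommGroup H] [InnerProductSpace ℂ H] [CompleteSpace H]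
    (D : H →L[ℂ] H) (γ : Fin 2 → Fin 2 → ℂ)
    (T₀ T₁ : H →L[ℂ] H)
    (hT₀l : (1 + γ 0 1 • star D - γ 1 0 • D +
        (γ 0 0 * γ 1 1 - γ 1 0 * γ 0 1) • (D * star D)) * T₀ = 1)
    (hT₀r : T₀ * (1 + γ 0 1 • star D - γ 1 0 • D +
        (γ 0 0 * γ 1 1 - γ 1 0 * γ 0 1) • (D * star D)) = 1)
    (hT₁l : (1 + γ 0 1 • star D - γ 1 0 • D +
        (γ 0 0 * γ 1 1 - γ 1 0 * γ 0 1) • (star D * D)) * T₁ = 1)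
    (hT₁r : T₁ * (1 + γ 0 1 • star D - γ 1 0 • D +
        (γ 0 0 * γ 1 1 - γ 1 0 * γ 0 1) • (star D * D)) = 1)
    (R : Fin 2 → Fin 2 → (H →L[ℂ] H))
    (hR00 : R 0 0 = γ 1 1 • (D * T₁ * star D))
    (hR01 : R 0 1 = -(D * T₁ * (1 + γ 0 1 • star D)))
    (hR11 : R 1 1 = γ 0 0 • (star D * T₀ * D))
    (hR10 : R 1 0 = star D * T₀ * (1 - γ 1 0 • D))
    (G : Fin 2 → Fin 2 → ℂ)
    (hG : ∀ m n, G m n = γ m n + (starRingEnd ℂ) (γ n m)) :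
    ∀ a b : Fin 2,
      R a b + star (R b a) = (∑ k, ∑ l, G k l • (star (R k a) * R l b)) ∧
      R a b + star (R b a) = (∑ k, ∑ l, G k l • (R a k * star (R b l))) := by
  have hD1 : D = D * (T₁ * (1 + γ 0 1 • star D - γ 1 0 • D +
      (γ 0 0 * γ 1 1 - γ 1 0 * γ 0 1) • (star D * D))) := by rw [hT₁r, mul_one]
  have hS1 : star D = star D * (T₀ * (1 + γ 0 1 • star D - γ 1 0 • D +
      (γ 0 0 * γ 1 1 - γ 1 0 * γ 0 1) • (D * star D))) := by rw [hT₀r, mul_one]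
  set RM : Matrix (Fin 2) (Fin 2) (H →L[ℂ] H) := Matrix.of (fun a b => R a b) with hRM
  set GM : Matrix (Fin 2) (Fin 2) (H →L[ℂ] H) := Matrix.of (fun k l => γ k l • 1) with hGM
  set AM : Matrix (Fin 2) (Fin 2) (H →L[ℂ] H) := !![0, -D; star D, 0] with hAM
  set VM : Matrix (Fin 2) (Fin 2) (H →L[ℂ] H) :=
    !![(1 + γ 0 1 • star D) * T₀, (γ 1 1 • D) * T₁;
       -((γ 0 0 • star D) * T₀), (1 - γ 1 0 • D) * T₁] with hVM
  have hA : star AM = -AM := by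
    refine Matrix.ext fun i j => ?_
    fin_cases i <;> fin_cases j <;>
      simp [hAM, Matrix.star_apply, star_star]
  have hR2 : RM = AM - RM * GM * AM := by
    refine Matrix.ext fun i j => ?_
    fin_cases i <;> fin_cases j <;>
      simp only [hRM, hGM, hAM, Matrix.mul_apply, Matrix.sub_apply, Matrix.of_apply,
        Fin.sum_univ_two, Fin.zero_eta, Fin.mk_one, Fin.isValue,
        Matrix.cons_val', Matrix.cons_val_zero, Matrix.cons_val_one,
        Matrix.head_cons, Matrix.head_fin_const, Matrix.empty_val', Matrix.cons_val_fin_one,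
        mul_zero, zero_mul, add_zero, zero_add, mul_one, one_mul, sub_zero, zero_sub]
    · -- R 0 0 = -((R 0 0 * γ 0 1 • 1 + R 0 1 * γ 1 1 • 1) * star D)
      rw [hR00, hR01]
      simp only [mul_add, add_mul, mul_sub, sub_mul, smul_add, smul_sub, mul_smul_comm,
        smul_mul_assoc, smul_smul, mul_one, one_mul, mul_neg, neg_mul, neg_neg, neg_add,
        mul_assoc]
      module
    · -- R 0 1 = -D - (R 0 0 * γ 0 0 • 1 + R 0 1 * γ 1 0 • 1) * -D
      rw [eq_sub_iff_add_eq, hR00, hR01]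
      conv_rhs => rw [hD1]
      simp only [mul_add, add_mul, mul_sub, sub_mul, smul_add, smul_sub, mul_smul_comm,
        smul_mul_assoc, smul_smul, mul_one, one_mul, mul_neg, neg_mul, neg_neg, neg_add,
        mul_assoc]
      module
    · -- R 1 0 = star D - (R 1 0 * γ 0 1 • 1 + R 1 1 * γ 1 1 • 1) * star D
      rw [eq_sub_iff_add_eq, hR10, hR11]
      conv_rhs => rw [hS1]
      simp only [mul_add, add_mul, mul_sub, sub_mul, smul_add, smul_sub, mul_smul_comm,
        smul_mul_assoc, smul_smul, mul_one, one_mul, mul_neg, neg_mul, neg_neg, neg_add,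
        mul_assoc]
      module
    · -- R 1 1 = -((R 1 0 * γ 0 0 • 1 + R 1 1 * γ 1 0 • 1) * -D)
      rw [hR10, hR11]
      simp only [mul_add, add_mul, mul_sub, sub_mul, smul_add, smul_sub, mul_smul_comm,
        smul_mul_assoc, smul_smul, mul_one, one_mul, mul_neg, neg_mul, neg_neg, neg_add,
        mul_assoc]
      module
  have hPV : (1 + AM * GM) * VM = 1 := by
    refine Matrix.ext fun i j => ?_
    fin_cases i <;> fin_cases j <;>
      simp only [hGM, hAM, hVM, Matrix.mul_apply, Matrix.add_apply, Matrix.one_apply,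
        Matrix.of_apply, Fin.sum_univ_two, Fin.zero_eta, Fin.mk_one, Fin.isValue,
        Matrix.cons_val', Matrix.cons_val_zero, Matrix.cons_val_one,
        Matrix.head_cons, Matrix.head_fin_const, Matrix.empty_val', Matrix.cons_val_fin_one,
        mul_zero, zero_mul, add_zero, zero_add, mul_one, one_mul, sub_zero, zero_sub,
        reduceIte, one_ne_zero, zero_ne_one, if_true, if_false, ite_true, ite_false]
    · trans ((1 + γ 0 1 • star D - γ 1 0 • D +
          (γ 0 0 * γ 1 1 - γ 1 0 * γ 0 1) • (D * star D)) * T₀)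
      · simp only [mul_add, add_mul, mul_sub, sub_mul, smul_add, smul_sub, mul_smul_comm,
          smul_mul_assoc, smul_smul, mul_one, one_mul, mul_neg, neg_mul, neg_neg, neg_add,
          mul_assoc]
        module
      · exact hT₀l
    · simp only [mul_add, add_mul, mul_sub, sub_mul, smul_add, smul_sub, mul_smul_comm,
        smul_mul_assoc, smul_smul, mul_one, one_mul, mul_neg, neg_mul, neg_neg, neg_add,
        mul_assoc]
      module
    · simp only [mul_add, add_mul, mul_sub, sub_mul, smul_add, smul_sub, mul_smul_comm,
        smul_mul_assoc, smul_smul, mul_one, one_mul, mul_neg, neg_mul, neg_neg, neg_add,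
        mul_assoc]
      module
    · trans ((1 + γ 0 1 • star D - γ 1 0 • D +
          (γ 0 0 * γ 1 1 - γ 1 0 * γ 0 1) • (star D * D)) * T₁)
      · simp only [mul_add, add_mul, mul_sub, sub_mul, smul_add, smul_sub, mul_smul_comm,
          smul_mul_assoc, smul_smul, mul_one, one_mul, mul_neg, neg_mul, neg_neg, neg_add,
          mul_assoc]
        module
      · exact hT₁l
  obtain ⟨hU1, hU2⟩ := scattering_unitar_aux RM AM GM VM hA hR2 hPV
  intro a b
  constructor
  · calc R a b + star (R b a) = (RM + star RM) a b := by
          simp [hRM, Matrix.add_apply, Matrix.star_apply, Matrix.of_apply]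
      _ = (star RM * (GM + star GM) * RM) a b := congrFun (congrFun hU1 a) b
      _ = ∑ k, ∑ l, G k l • (star (R k a) * R l b) := by
          simp only [hRM, hGM, hG, Matrix.mul_apply, Matrix.add_apply, Matrix.star_apply,
            Matrix.of_apply, Fin.sum_univ_two, star_smul, star_one, Complex.star_def,
            add_smul, mul_add, add_mul, mul_smul_comm, smul_mul_assoc, smul_smul,
            mul_one, one_mul]
          module
  · calc R a b + star (R b a) = (RM + star RM) a b := by
          simp [hRM, Matrix.add_apply, Matrix.star_apply, Matrix.of_apply]
      _ = (RM * (GM + star GM) * star RM) a b := congrFun (congrFun hU2 a) b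
      _ = ∑ k, ∑ l, G k l • (R a k * star (R b l)) := by
          simp only [hRM, hGM, hG, Matrix.mul_apply, Matrix.add_apply, Matrix.star_apply,
            Matrix.of_apply, Fin.sum_univ_two, star_smul, star_one, Complex.star_def,
            add_smul, mul_add, add_mul, mul_smul_comm, smul_mul_assoc, smul_smul,
            mul_one, one_mul]
          module
end
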